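/- arXiv:2605.11776 — 11 statements merged into one kernel-verified Lean document; each statement's English description precedes it below -/
import Mathlib

section
/- Let B be an event with P(B) > 0. Let Y⁰, Y¹, M₀, M₁ : Ω → {0,1} be random variables and define, for a ∈ {0,1}, Z_a = M_a·Y¹ + (1 − M_a)·Y⁰ (that is, Z_a(ω) = Y^{M_a(ω)}(ω)). Assume that for every a, b ∈ {0,1}, Pr(Y^b = 1, M_a = 1 | B) = Pr(Y^b = 1 | B) · Pr(M_a = 1 | B). Then E[Z₁ − Z₀ | B] = E[Y¹ − Y⁰ | B] · E[M₁ − M₀ | B]. -/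
open MeasureTheory

/-- Conditional probability `Pr(A | B) = P(A ∩ B) / P(B)` as a real number. -/
noncomputable def condProb {Ω : Type*} [MeasurableSpace Ω] (μ : Measure Ω) (A B : Set Ω) : ℝ :=
  (μ (A ∩ B)).toReal / (μ B).toReal

/-- Conditional expectation given an event: `E[W | B] = E[W · 1_B] / P(B)`. -/
noncomputable def condExpEvent {Ω : Type*} [MeasurableSpace Ω] (μ : Measure Ω)
    (W : Ω → ℝ) (B : Set Ω) : ℝ :=
  (∫ ω in B, W ω ∂μ) / (μ B).toReal

lemma aux_int01 {Ω : Type*} [MeasurableSpace Ω] (μ : Measure Ω) [IsProbabilityMeasure μ]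
    (B : Set Ω) (W : Ω → ℝ) (hW : Measurable W)
    (h01 : ∀ ω, W ω = 0 ∨ W ω = 1) : Integrable W (μ.restrict B) := by
  refine (integrable_const (1:ℝ)).mono' hW.aestronglyMeasurable ?_
  filter_upwards with ω
  rcases h01 ω with h | h <;> simp [h]

lemma aux_eq01 {Ω : Type*} [MeasurableSpace Ω] (μ : Measure Ω) [IsProbabilityMeasure μ]
    (B : Set Ω) (W : Ω → ℝ) (hW : Measurable W)
    (h01 : ∀ ω, W ω = 0 ∨ W ω = 1) :
    ∫ ω in B, W ω ∂μ = (μ ({ω | W ω = 1} ∩ B)).toReal := by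
  have hS : MeasurableSet {ω | W ω = 1} := hW (measurableSet_singleton 1)
  have hWeq : ∀ ω, W ω = Set.indicator {ω | W ω = 1} (fun _ => (1:ℝ)) ω := by
    intro ω
    rcases h01 ω with h | h <;> simp [Set.indicator_apply, Set.mem_setOf_eq, h]
  calc ∫ ω in B, W ω ∂μ
      = ∫ ω in B, Set.indicator {ω | W ω = 1} (fun _ => (1:ℝ)) ω ∂μ := by
        exact integral_congr_ae (Filter.Eventually.of_forall hWeq)
    _ = ∫ ω in B ∩ {ω | W ω = 1}, (1:ℝ) ∂μ := setIntegral_indicator hS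
    _ = (μ ({ω | W ω = 1} ∩ B)).toReal := by rw [Set.inter_comm]; simp; rfl

/-- if for all `a b ∈ {0,1}`, `Pr(Y^b = 1, M_a = 1 | B) = Pr(Y^b = 1 | B) ·
`Pr(M_a = 1 | B)`, and `Z_a = M_a·Y¹ + (1 − M_a)·Y⁰`, then
`E[Z₁ − Z₀ | B] = E[Y¹ − Y⁰ | B] · E[M₁ − M₀ | B]`. -/
theorem stmt0 {Ω : Type*} [MeasurableSpace Ω] (μ : Measure Ω) [IsProbabilityMeasure μ]
    (B : Set Ω) (hBmeas : MeasurableSet B) (hBpos : 0 < μ B)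
    (Y M : Fin 2 → Ω → ℝ)
    (hY01 : ∀ b ω, Y b ω = 0 ∨ Y b ω = 1)
    (hM01 : ∀ a ω, M a ω = 0 ∨ M a ω = 1)
    (hYmeas : ∀ b, Measurable (Y b)) (hMmeas : ∀ a, Measurable (M a))
    (hindep : ∀ a b : Fin 2,
      condProb μ ({ω | Y b ω = 1} ∩ {ω | M a ω = 1}) B =
        condProb μ {ω | Y b ω = 1} B * condProb μ {ω | M a ω = 1} B)
    (Z : Fin 2 → Ω → ℝ)
    (hZ : ∀ a ω, Z a ω = M a ω * Y 1 ω + (1 - M a ω) * Y 0 ω) :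
    condExpEvent μ (fun ω => Z 1 ω - Z 0 ω) B =
      condExpEvent μ (fun ω => Y 1 ω - Y 0 ω) B *
        condExpEvent μ (fun ω => M 1 ω - M 0 ω) B := by
  set c : ℝ := (μ B).toReal with hc
  have hcpos : 0 < c := ENNReal.toReal_pos hBpos.ne' (measure_ne_top μ B)
  -- 0/1 facts for products
  have hprod01 : ∀ a b ω, M a ω * Y b ω = 0 ∨ M a ω * Y b ω = 1 := by
    intro a b ω
    rcases hM01 a ω with h | h <;> rcases hY01 b ω with h' | h' <;> simp [h, h']
  have hprodmeas : ∀ a b, Measurable (fun ω => M a ω * Y b ω) :=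
    fun a b => (hMmeas a).mul (hYmeas b)
  -- integrability
  have hIntP : ∀ a b, Integrable (fun ω => M a ω * Y b ω) (μ.restrict B) :=
    fun a b => aux_int01 μ B _ (hprodmeas a b) (hprod01 a b)
  have hIntY : ∀ b, Integrable (Y b) (μ.restrict B) :=
    fun b => aux_int01 μ B _ (hYmeas b) (hY01 b)
  have hIntM : ∀ a, Integrable (M a) (μ.restrict B) :=
    fun a => aux_int01 μ B _ (hMmeas a) (hM01 a)
  -- values of the basic integrals
  set p : Fin 2 → ℝ := fun b => (μ ({ω | Y b ω = 1} ∩ B)).toReal with hp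
  set q : Fin 2 → ℝ := fun a => (μ ({ω | M a ω = 1} ∩ B)).toReal with hq
  have hYint : ∀ b, ∫ ω in B, Y b ω ∂μ = p b :=
    fun b => aux_eq01 μ B _ (hYmeas b) (hY01 b)
  have hMint : ∀ a, ∫ ω in B, M a ω ∂μ = q a :=
    fun a => aux_eq01 μ B _ (hMmeas a) (hM01 a)
  have hPint : ∀ a b, ∫ ω in B, M a ω * Y b ω ∂μ = p b * q a / c := by
    intro a b
    have hset : {ω | M a ω * Y b ω = 1} = {ω | Y b ω = 1} ∩ {ω | M a ω = 1} := by
      ext ω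
      simp only [Set.mem_setOf_eq, Set.mem_inter_iff]
      constructor
      · intro h
        rcases hM01 a ω with h1 | h1 <;> rcases hY01 b ω with h2 | h2 <;>
          simp [h1, h2] at h ⊢
      · rintro ⟨h1, h2⟩; simp [h1, h2]
    rw [aux_eq01 μ B _ (hprodmeas a b) (hprod01 a b), hset]
    have := hindep a b
    unfold condProb at this
    have h2 : (μ (({ω | Y b ω = 1} ∩ {ω | M a ω = 1}) ∩ B)).toReal / c
        = p b / c * (q a / c) := this
    field_simp at h2
    rw [eq_div_iff hcpos.ne']
    apply mul_right_cancel₀ hcpos.ne'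
    linear_combination c * h2
  -- decompose the Z integrand
  have hZeq : ∀ ω, Z 1 ω - Z 0 ω =
      (M 1 ω * Y 1 ω - M 0 ω * Y 1 ω) - (M 1 ω * Y 0 ω - M 0 ω * Y 0 ω) := by
    intro ω; rw [hZ 1 ω, hZ 0 ω]; ring
  have hZint : ∫ ω in B, (Z 1 ω - Z 0 ω) ∂μ =
      (p 1 * q 1 / c - p 1 * q 0 / c) - (p 0 * q 1 / c - p 0 * q 0 / c) := by
    have hI1 : Integrable (fun ω => M 1 ω * Y 1 ω - M 0 ω * Y 1 ω) (μ.restrict B) :=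
      (hIntP 1 1).sub (hIntP 0 1)
    have hI0 : Integrable (fun ω => M 1 ω * Y 0 ω - M 0 ω * Y 0 ω) (μ.restrict B) :=
      (hIntP 1 0).sub (hIntP 0 0)
    rw [integral_congr_ae (Filter.Eventually.of_forall hZeq),
      integral_sub hI1 hI0,
      integral_sub (hIntP 1 1) (hIntP 0 1), integral_sub (hIntP 1 0) (hIntP 0 0),
      hPint 1 1, hPint 0 1, hPint 1 0, hPint 0 0]
  have hYsub : ∫ ω in B, (Y 1 ω - Y 0 ω) ∂μ = p 1 - p 0 := by
    rw [integral_sub (hIntY 1) (hIntY 0), hYint 1, hYint 0]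
  have hMsub : ∫ ω in B, (M 1 ω - M 0 ω) ∂μ = q 1 - q 0 := by
    rw [integral_sub (hIntM 1) (hIntM 0), hMint 1, hMint 0]
  unfold condExpEvent
  rw [hZint, hYsub, hMsub, ← hc]
  field_simp
end

section
/- Let B be an event with P(B) > 0. Let Y⁰, Y¹, M₀, M₁ : Ω → {0,1} be random variables and define Z_a = M_a·Y¹ + (1 − M_a)·Y⁰ for a ∈ {0,1}. Assume that for every a, b ∈ {0,1}, Pr(Y^b = 1, M_a = 1 | B) = Pr(Y^b = 1 | B) · Pr(M_a = 1 | B). Then |E[Z₁ − Z₀ | B]| ≤ |E[Y¹ − Y⁰ | B]|. -/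
open MeasureTheory

lemma indicator_int {Ω : Type*} [MeasurableSpace Ω] (μ : Measure Ω) [IsProbabilityMeasure μ]
    (B S : Set Ω) (hS : MeasurableSet S) :
    Integrable (S.indicator fun _ => (1:ℝ)) (μ.restrict B) :=
  (integrable_const (1:ℝ)).indicator hS

lemma indicator_setInt {Ω : Type*} [MeasurableSpace Ω] (μ : Measure Ω) [IsProbabilityMeasure μ]
    (B S : Set Ω) (hS : MeasurableSet S) :
    (∫ ω in B, S.indicator (fun _ => (1:ℝ)) ω ∂μ) = (μ (S ∩ B)).toReal := by
  rw [integral_indicator_const _ hS, measureReal_def, Measure.restrict_apply hS]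
  simp

/-- under the conditional independence assumption,
`|E[Z₁ − Z₀ | B]| ≤ |E[Y¹ − Y⁰ | B]|` (Property 1, first claim). -/
theorem stmt1 {Ω : Type*} [MeasurableSpace Ω] (μ : Measure Ω) [IsProbabilityMeasure μ]
    (B : Set Ω) (hBmeas : MeasurableSet B) (hBpos : 0 < μ B)
    (Y M : Fin 2 → Ω → ℝ)
    (hY01 : ∀ b ω, Y b ω = 0 ∨ Y b ω = 1)
    (hM01 : ∀ a ω, M a ω = 0 ∨ M a ω = 1)
    (hYmeas : ∀ b, Measurable (Y b)) (hMmeas : ∀ a, Measurable (M a))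
    (hindep : ∀ a b : Fin 2,
      condProb μ ({ω | Y b ω = 1} ∩ {ω | M a ω = 1}) B =
        condProb μ {ω | Y b ω = 1} B * condProb μ {ω | M a ω = 1} B)
    (Z : Fin 2 → Ω → ℝ)
    (hZ : ∀ a ω, Z a ω = M a ω * Y 1 ω + (1 - M a ω) * Y 0 ω) :
    |condExpEvent μ (fun ω => Z 1 ω - Z 0 ω) B| ≤
      |condExpEvent μ (fun ω => Y 1 ω - Y 0 ω) B| := by
  set PB : ℝ := (μ B).toReal with hPB
  have hPBpos : 0 < PB := ENNReal.toReal_pos hBpos.ne' (measure_ne_top μ B)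
  -- sets
  set S : Fin 2 → Set Ω := fun b => {ω | Y b ω = 1} with hS
  set T : Fin 2 → Set Ω := fun a => {ω | M a ω = 1} with hT
  have hSm : ∀ b, MeasurableSet (S b) := fun b => (hYmeas b) (measurableSet_singleton 1)
  have hTm : ∀ a, MeasurableSet (T a) := fun a => (hMmeas a) (measurableSet_singleton 1)
  set pY : Fin 2 → ℝ := fun b => condProb μ (S b) B with hpY
  set pM : Fin 2 → ℝ := fun a => condProb μ (T a) B with hpM
  -- indicator representations
  have hYind : ∀ b ω, Y b ω = (S b).indicator (fun _ => (1:ℝ)) ω := by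
    intro b ω
    rcases hY01 b ω with h | h
    · rw [h, Set.indicator_of_notMem]
      simp [hS, h]
    · rw [h, Set.indicator_of_mem]
      exact h
  have hMYind : ∀ a b ω, M a ω * Y b ω = ((S b) ∩ (T a)).indicator (fun _ => (1:ℝ)) ω := by
    intro a b ω
    rcases hM01 a ω with hm | hm <;> rcases hY01 b ω with hy | hy <;>
      simp [Set.indicator_apply, hS, hT, hy, hm]
  -- integrals
  have hYint : ∀ b, (∫ ω in B, Y b ω ∂μ) = pY b * PB := by
    intro b
    have : (∫ ω in B, Y b ω ∂μ) = (∫ ω in B, (S b).indicator (fun _ => (1:ℝ)) ω ∂μ) := by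
      apply integral_congr_ae; filter_upwards with ω; exact hYind b ω
    rw [this, indicator_setInt μ B (S b) (hSm b)]
    rw [hpY]; simp only [condProb]
    field_simp
    rw [← hPB, mul_div_assoc, div_self hPBpos.ne', mul_one]
  have hMYint : ∀ a b, (∫ ω in B, M a ω * Y b ω ∂μ) = pY b * pM a * PB := by
    intro a b
    have : (∫ ω in B, M a ω * Y b ω ∂μ)
        = (∫ ω in B, ((S b) ∩ (T a)).indicator (fun _ => (1:ℝ)) ω ∂μ) := by
      apply integral_congr_ae; filter_upwards with ω; exact hMYind a b ω
    rw [this, indicator_setInt μ B _ ((hSm b).inter (hTm a))]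
    have h : condProb μ (S b ∩ T a) B = pY b * pM a := hindep a b
    rw [condProb, div_eq_iff hPBpos.ne'] at h
    rw [h]
  -- integrability
  have hYintg : ∀ b, Integrable (Y b) (μ.restrict B) := by
    intro b
    refine (indicator_int μ B (S b) (hSm b)).congr ?_
    filter_upwards with ω; exact (hYind b ω).symm
  have hMYintg : ∀ a b, Integrable (fun ω => M a ω * Y b ω) (μ.restrict B) := by
    intro a b
    refine (indicator_int μ B _ ((hSm b).inter (hTm a))).congr ?_
    filter_upwards with ω; exact (hMYind a b ω).symm
  -- compute E[Y1 - Y0 | B]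
  have hEY : condExpEvent μ (fun ω => Y 1 ω - Y 0 ω) B = pY 1 - pY 0 := by
    rw [condExpEvent, integral_sub (hYintg 1) (hYintg 0), hYint 1, hYint 0, ← hPB]
    field_simp
  -- compute E[Z1 - Z0 | B]
  have hZeq : (fun ω => Z 1 ω - Z 0 ω) = fun ω =>
      (M 1 ω * Y 1 ω - M 1 ω * Y 0 ω) - (M 0 ω * Y 1 ω - M 0 ω * Y 0 ω) := by
    funext ω; rw [hZ 1 ω, hZ 0 ω]; ring
  have hEZ : condExpEvent μ (fun ω => Z 1 ω - Z 0 ω) B = (pM 1 - pM 0) * (pY 1 - pY 0) := by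
    have hA : Integrable (fun ω => M 1 ω * Y 1 ω - M 1 ω * Y 0 ω) (μ.restrict B) :=
      (hMYintg 1 1).sub (hMYintg 1 0)
    have hB' : Integrable (fun ω => M 0 ω * Y 1 ω - M 0 ω * Y 0 ω) (μ.restrict B) :=
      (hMYintg 0 1).sub (hMYintg 0 0)
    rw [condExpEvent, hZeq, integral_sub hA hB',
      integral_sub (hMYintg 1 1) (hMYintg 1 0), integral_sub (hMYintg 0 1) (hMYintg 0 0),
      hMYint 1 1, hMYint 1 0, hMYint 0 1, hMYint 0 0, ← hPB]
    field_simp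
  rw [hEY, hEZ, abs_mul]
  have hpM01 : ∀ a, pM a ∈ Set.Icc (0:ℝ) 1 := by
    intro a
    constructor
    · exact div_nonneg ENNReal.toReal_nonneg ENNReal.toReal_nonneg
    · rw [hpM]; simp only [condProb]
      rw [div_le_one hPBpos]
      exact ENNReal.toReal_mono (measure_ne_top μ B)
        (measure_mono Set.inter_subset_right)
  have h1 : |pM 1 - pM 0| ≤ 1 := by
    have h0 := hpM01 0; have h1 := hpM01 1
    rw [abs_le]
    constructor <;> [linarith [h0.2, h1.1]; linarith [h0.1, h1.2]]
  calc |pM 1 - pM 0| * |pY 1 - pY 0| ≤ 1 * |pY 1 - pY 0| :=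
        mul_le_mul_of_nonneg_right h1 (abs_nonneg _)
    _ = |pY 1 - pY 0| := one_mul _
end

section
/- Let B be an event with P(B) > 0. Let Y⁰, Y¹, M₀, M₁ : Ω → {0,1} be random variables satisfying M₀(ω) ≤ M₁(ω) and Y⁰(ω) ≤ Y¹(ω) for all ω (monotonicity), and define Z_a = M_a·Y¹ + (1 − M_a)·Y⁰ for a ∈ {0,1}. Assume that for every a, b ∈ {0,1}, Pr(Y^b = 1, M_a = 1 | B) = Pr(Y^b = 1 | B) · Pr(M_a = 1 | B). Then E[Z₁ − Z₀ | B] ≤ E[Y¹ − Y⁰ | B]. -/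
/-!
Pointwise, `Z₁ − Z₀ = (M₁ − M₀)(Y¹ − Y⁰)`. Monotonicity makes both factors nonnegative and the
first is at most `1`, so `0 ≤ Z₁ − Z₀ ≤ Y¹ − Y⁰` everywhere; integrating over `B` and dividing by
`P(B)` gives the claim.
-/

open MeasureTheory

lemma mem_Icc_of_eq_zero_or_eq_one {α : Type*} [Zero α] [One α] [Preorder α] [ZeroLEOneClass α]
    {x : α} (h : x = 0 ∨ x = 1) : x ∈ Set.Icc 0 1 := by
  rcases h with rfl | rfl
  · exact ⟨le_rfl, zero_le_one⟩
  · exact ⟨zero_le_one, le_rfl⟩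

lemma condExpEvent_mono_of_nonneg {Ω : Type*} [MeasurableSpace Ω] {μ : Measure Ω} {B : Set Ω}
    {f g : Ω → ℝ} (hf : 0 ≤ᵐ[μ.restrict B] f) (hg : IntegrableOn g B μ)
    (hfg : f ≤ᵐ[μ.restrict B] g) :
    condExpEvent μ f B ≤ condExpEvent μ g B :=
  div_le_div_of_nonneg_right (integral_mono_of_nonneg hf hg hfg) ENNReal.toReal_nonneg

theorem stmt2_general {Ω : Type*} [MeasurableSpace Ω] (μ : Measure Ω) [IsProbabilityMeasure μ]
    (B : Set Ω)
    (Y M : Fin 2 → Ω → ℝ)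
    (hY01 : ∀ b ω, Y b ω = 0 ∨ Y b ω = 1)
    (hM01 : ∀ a ω, M a ω = 0 ∨ M a ω = 1)
    (hMmono : ∀ ω, M 0 ω ≤ M 1 ω)
    (hYmono : ∀ ω, Y 0 ω ≤ Y 1 ω)
    (hYmeas : ∀ b, Measurable (Y b))
    (Z : Fin 2 → Ω → ℝ)
    (hZ : ∀ a ω, Z a ω = M a ω * Y 1 ω + (1 - M a ω) * Y 0 ω) :
    condExpEvent μ (fun ω => Z 1 ω - Z 0 ω) B ≤
      condExpEvent μ (fun ω => Y 1 ω - Y 0 ω) B := by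
  have hZ_sub : ∀ ω, Z 1 ω - Z 0 ω = (M 1 ω - M 0 ω) * (Y 1 ω - Y 0 ω) := fun ω => by
    rw [hZ, hZ]; ring
  have hM_sub_le_one : ∀ ω, M 1 ω - M 0 ω ≤ 1 := fun ω => by
    linarith [(mem_Icc_of_eq_zero_or_eq_one (hM01 1 ω)).2,
      (mem_Icc_of_eq_zero_or_eq_one (hM01 0 ω)).1]
  have hY_sub_nonneg : ∀ ω, 0 ≤ Y 1 ω - Y 0 ω := fun ω => sub_nonneg.2 (hYmono ω)
  have hY_sub_integrable : IntegrableOn (fun ω => Y 1 ω - Y 0 ω) B μ := by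
    refine (Integrable.of_bound ((hYmeas 1).sub (hYmeas 0)).aestronglyMeasurable 1
      (ae_of_all _ fun ω => ?_)).integrableOn
    rw [Pi.sub_apply, Real.norm_of_nonneg (hY_sub_nonneg ω)]
    linarith [(mem_Icc_of_eq_zero_or_eq_one (hY01 1 ω)).2,
      (mem_Icc_of_eq_zero_or_eq_one (hY01 0 ω)).1]
  refine condExpEvent_mono_of_nonneg (ae_of_all _ fun ω => ?_) hY_sub_integrable
    (ae_of_all _ fun ω => ?_)
  · simpa only [Pi.zero_apply, hZ_sub] using mul_nonneg (sub_nonneg.2 (hMmono ω)) (hY_sub_nonneg ω)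
  · simpa only [hZ_sub] using mul_le_of_le_one_left (hY_sub_nonneg ω) (hM_sub_le_one ω)

/-- under monotonicity and the conditional independence assumption,
`E[Z₁ − Z₀ | B] ≤ E[Y¹ − Y⁰ | B]` (Property 1, second claim). -/
theorem stmt2 {Ω : Type*} [MeasurableSpace Ω] (μ : Measure Ω) [IsProbabilityMeasure μ]
    (B : Set Ω) (hBmeas : MeasurableSet B) (hBpos : 0 < μ B)
    (Y M : Fin 2 → Ω → ℝ)
    (hY01 : ∀ b ω, Y b ω = 0 ∨ Y b ω = 1)
    (hM01 : ∀ a ω, M a ω = 0 ∨ M a ω = 1)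
    (hMmono : ∀ ω, M 0 ω ≤ M 1 ω)
    (hYmono : ∀ ω, Y 0 ω ≤ Y 1 ω)
    (hYmeas : ∀ b, Measurable (Y b)) (hMmeas : ∀ a, Measurable (M a))
    (hindep : ∀ a b : Fin 2,
      condProb μ ({ω | Y b ω = 1} ∩ {ω | M a ω = 1}) B =
        condProb μ {ω | Y b ω = 1} B * condProb μ {ω | M a ω = 1} B)
    (Z : Fin 2 → Ω → ℝ)
    (hZ : ∀ a ω, Z a ω = M a ω * Y 1 ω + (1 - M a ω) * Y 0 ω) :
    condExpEvent μ (fun ω => Z 1 ω - Z 0 ω) B ≤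
      condExpEvent μ (fun ω => Y 1 ω - Y 0 ω) B :=
  stmt2_general μ B Y M hY01 hM01 hMmono hYmono hYmeas Z hZ
end

section
/- Assume the potential-outcome model with the Monotonicity and No-confounding-and-cross-world-independence assumptions. Fix K = {k₁ < ⋯ < k_r} ⊆ {1,…,p} and x ∈ {0,1}^p. Assume P(X = x, Y = 1) > 0, P(X = w) > 0 for every w ∈ {0,1}^p, and Pr(X_i = 1 | X̄_i = x̄_i) > 0 for every i ∈ K ∪ hat K ∪ underline K, where X̄_i = (X₁,…,X_{i−1}) and x̄_i = (x₁,…,x_{i−1}). Then PRC(X_K ⇒ Y | X = x, Y = 1) equals the sum, over all pairs (x*, x') ∈ {0,1}^p × {0,1}^p with x* ≼ x' ≼ x, x*_j = x'_j = x_j for all j ∈ ol K, and x*_i = 0 for all i ∈ K, of the product of the following three factors: (1) [Pr(Y = 1 | X = x') − Pr(Y = 1 | X = x*)] / Pr(Y = 1 | X = x); (2) Π_{i ∈ K} [ (1 − x'_i) + x_i (2x'_i − 1) · Pr(X_i = 1 | X̄_i = x̄''_i) / Pr(X_i = 1 | X̄_i = x̄_i) ]; (3) Π_{i ∈ hat K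 ∪ underline K} [ (1 − x'_i)(1 − x*_i) + x_i (2x'_i − 1)(1 − x*_i) · Pr(X_i = 1 | X̄_i = x̄'_i) / Pr(X_i = 1 | X̄_i = x̄_i) + x_i x'_i (2x*_i − 1) · Pr(X_i = 1 | X̄_i = x̄*_i) / Pr(X_i = 1 | X̄_i = x̄_i) ]; where x'' ∈ {0,1}^p is defined by x''_i = x'_i for i ∈ K ∪ underline K and x''_j = 0 for j ∈ ol K ∪ hat K, and x̄'_i, x̄*_i, x̄''_i denote the first i−1 coordinates of x', x*, x'' respectively. (Theorem 1, identification formula for the probability of root cause.) -/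
open MeasureTheory ProbabilityTheory
open scoped Classical

/-- Partial-intervention potential outcome of `X_i`: `(X_i)_{S,u}`. -/
def intX {Ω : Type*} {p : ℕ} (X : (i : Fin p) → (Fin i.1 → Bool) → Ω → Bool)
    (S : Finset (Fin p)) (u : Fin p → Bool) (i : Fin p) (ω : Ω) : Bool :=
  if i ∈ S then u i
  else X i (fun j => intX X S u ⟨j.1, lt_trans j.isLt i.isLt⟩ ω) ω
termination_by i.1
decreasing_by exact j.isLt

/-- Partial-intervention potential outcome of `Y`: `Y_{S,u}`. -/
def intY {Ω : Type*} {p : ℕ} (X : (i : Fin p) → (Fin i.1 → Bool) → Ω → Bool)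
    (Ypo : (Fin p → Bool) → Ω → Bool) (S : Finset (Fin p)) (u : Fin p → Bool) (ω : Ω) : Bool :=
  Ypo (fun i => intX X S u i ω) ω

/-- Observed variable `X_i` (consistency: no intervention). -/
def obsX {Ω : Type*} {p : ℕ} (X : (i : Fin p) → (Fin i.1 → Bool) → Ω → Bool)
    (i : Fin p) (ω : Ω) : Bool :=
  intX X ∅ (fun _ => false) i ω

/-- Observed outcome `Y`. -/
def obsY {Ω : Type*} {p : ℕ} (X : (i : Fin p) → (Fin i.1 → Bool) → Ω → Bool)
    (Ypo : (Fin p → Bool) → Ω → Bool) (ω : Ω) : Bool :=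
  intY X Ypo ∅ (fun _ => false) ω

/-- The cause event `C_K`. -/
def causeEvent {Ω : Type*} {p : ℕ} (X : (i : Fin p) → (Fin i.1 → Bool) → Ω → Bool)
    (Ypo : (Fin p → Bool) → Ω → Bool) (K : Finset (Fin p)) : Set Ω :=
  {ω | ∃ u u' : Fin p → Bool, u ≠ u' ∧ intY X Ypo K u ω ≠ intY X Ypo K u' ω}

/-- The root event `R_K` (relative to the ancestor set `A`). -/
def rootEvent {Ω : Type*} {p : ℕ} (X : (i : Fin p) → (Fin i.1 → Bool) → Ω → Bool)
    (Ypo : (Fin p → Bool) → Ω → Bool) (K A : Finset (Fin p)) : Set Ω :=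
  {ω | ∀ v v' : Fin p → Bool,
    intY X Ypo K (fun i => intX X A v i ω) ω = intY X Ypo K (fun i => intX X A v' i ω) ω}

/-- Probability of root cause `PRC(X_K ⇒ Y | B)`. -/
noncomputable def PRC {Ω : Type*} [MeasurableSpace Ω] (μ : Measure Ω) {p : ℕ}
    (X : (i : Fin p) → (Fin i.1 → Bool) → Ω → Bool)
    (Ypo : (Fin p → Bool) → Ω → Bool) (K A : Finset (Fin p)) (B : Set Ω) : ℝ :=
  condProb μ (causeEvent X Ypo K ∩ rootEvent X Ypo K A) B

/-- `ol K`: indices strictly below `min K`. -/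
def olSet {p : ℕ} (K : Finset (Fin p)) (hK : K.Nonempty) : Finset (Fin p) :=
  Finset.univ.filter (fun j => j < K.min' hK)

/-- `hat K`: indices strictly between `min K` and `max K` not in `K`. -/
def hatSet {p : ℕ} (K : Finset (Fin p)) (hK : K.Nonempty) : Finset (Fin p) :=
  Finset.univ.filter (fun j => K.min' hK < j ∧ j < K.max' hK ∧ j ∉ K)

/-- `underline K`: indices strictly above `max K`. -/
def undSet {p : ℕ} (K : Finset (Fin p)) (hK : K.Nonempty) : Finset (Fin p) :=
  Finset.univ.filter (fun j => K.max' hK < j)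

/-- The σ-algebras generated by each family of potential outcomes. -/
noncomputable def poSigma {Ω : Type*} {p : ℕ}
    (X : (i : Fin p) → (Fin i.1 → Bool) → Ω → Bool)
    (Ypo : (Fin p → Bool) → Ω → Bool) : Fin (p + 1) → MeasurableSpace Ω :=
  fun i =>
    if h : i.1 < p then
      ⨆ xbar : Fin i.1 → Bool, MeasurableSpace.comap (X ⟨i.1, h⟩ xbar) inferInstance
    else
      ⨆ x : Fin p → Bool, MeasurableSpace.comap (Ypo x) inferInstance

/-- The event `{X = w}` for the observed cause vector. -/
def evX {Ω : Type*} {p : ℕ} (X : (i : Fin p) → (Fin i.1 → Bool) → Ω → Bool)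
    (w : Fin p → Bool) : Set Ω :=
  {ω | ∀ i, obsX X i ω = w i}

/-- The event `{X̄_i = w̄_i}` (the first `i-1` observed causes take the values of `w`). -/
def evPrefix {Ω : Type*} {p : ℕ} (X : (i : Fin p) → (Fin i.1 → Bool) → Ω → Bool)
    (i : Fin p) (w : Fin p → Bool) : Set Ω :=
  {ω | ∀ j : Fin p, j < i → obsX X j ω = w j}

/-- `Pr(X_i = 1 | X̄_i = w̄_i)`. -/
noncomputable def prX {Ω : Type*} [MeasurableSpace Ω] (μ : Measure Ω) {p : ℕ}
    (X : (i : Fin p) → (Fin i.1 → Bool) → Ω → Bool) (i : Fin p) (w : Fin p → Bool) : ℝ :=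
  condProb μ {ω | obsX X i ω = true} (evPrefix X i w)

/-- `{0,1}`-value of a Boolean. -/
def bR (b : Bool) : ℝ := if b then 1 else 0


namespace Stmt4


lemma finStrongInd {p : ℕ} {P : Fin p → Prop}
    (h : ∀ i : Fin p, (∀ j : Fin p, j.1 < i.1 → P j) → P i) : ∀ i, P i := by
  have H : ∀ n : ℕ, ∀ i : Fin p, i.1 ≤ n → P i := by
    intro n
    induction n with
    | zero => exact fun i hi => h i (fun j hj => absurd (lt_of_lt_of_le hj hi) (Nat.not_lt_zero _))
    | succ n IH => exact fun i hi => h i (fun j hj => IH j (Nat.le_of_lt_succ (lt_of_lt_of_le hj hi)))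
  exact fun i => H i.1 i le_rfl

variable {Ω : Type*} {p : ℕ} (X : (i : Fin p) → (Fin i.1 → Bool) → Ω → Bool)

/-- restriction of a full vector to coordinates below `i`. -/
def pre (w : Fin p → Bool) (i : Fin p) : Fin i.1 → Bool :=
  fun j => w ⟨j.1, lt_trans j.isLt i.isLt⟩

lemma intX_mem {S : Finset (Fin p)} (u : Fin p → Bool) {i : Fin p} (hi : i ∈ S) (ω : Ω) :
    intX X S u i ω = u i := by rw [intX, if_pos hi]

lemma intX_not_mem {S : Finset (Fin p)} (u : Fin p → Bool) {i : Fin p} (hi : i ∉ S) (ω : Ω) :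
    intX X S u i ω = X i (fun j => intX X S u ⟨j.1, lt_trans j.isLt i.isLt⟩ ω) ω := by
  rw [intX, if_neg hi]

lemma obsX_apply (i : Fin p) (ω : Ω) :
    obsX X i ω = X i (fun j => obsX X ⟨j.1, lt_trans j.isLt i.isLt⟩ ω) ω := by
  rw [obsX, intX_not_mem X _ (Finset.notMem_empty i)]
  rfl

lemma intX_mono (hXmono : ∀ (i : Fin p) (ω : Ω), Monotone (fun xbar : Fin i.1 → Bool => X i xbar ω)) (S : Finset (Fin p)) {u u' : Fin p → Bool} (h : u ≤ u') (ω : Ω) :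
    ∀ i, intX X S u i ω ≤ intX X S u' i ω := by
  refine finStrongInd (fun i IH => ?_)
  by_cases hi : i ∈ S
  · rw [intX_mem X u hi, intX_mem X u' hi]; exact h i
  · rw [intX_not_mem X u hi, intX_not_mem X u' hi]
    exact hXmono i ω (fun j => IH _ j.isLt)

lemma intX_congr (S : Finset (Fin p)) {u u' : Fin p → Bool} (h : ∀ j ∈ S, u j = u' j) (ω : Ω) :
    ∀ i, intX X S u i ω = intX X S u' i ω := by
  refine finStrongInd (fun i IH => ?_)
  by_cases hi : i ∈ S
  · rw [intX_mem X u hi, intX_mem X u' hi]; exact h i hi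
  · rw [intX_not_mem X u hi, intX_not_mem X u' hi]
    congr 1
    exact funext fun j => IH _ j.isLt

lemma intX_obs (S : Finset (Fin p)) {u : Fin p → Bool} (ω : Ω)
    (h : ∀ j ∈ S, u j = obsX X j ω) :
    ∀ i, intX X S u i ω = obsX X i ω := by
  refine finStrongInd (fun i IH => ?_)
  by_cases hi : i ∈ S
  · rw [intX_mem X u hi]; exact h i hi
  · rw [intX_not_mem X u hi, obsX_apply]
    congr 1
    exact funext fun j => IH _ j.isLt

lemma intX_low (S : Finset (Fin p)) (u : Fin p → Bool) (ω : Ω) :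
    ∀ i : Fin p, (∀ k ∈ S, i < k) → intX X S u i ω = obsX X i ω := by
  refine finStrongInd (fun i IH hlow => ?_)
  have hi : i ∉ S := fun h => absurd (hlow i h) (lt_irrefl i)
  rw [intX_not_mem X u hi, obsX_apply]
  congr 1
  refine funext fun j => IH _ j.isLt (fun k hk => lt_trans ?_ (hlow k hk))
  exact j.isLt

section Part2
variable {Ω : Type*} {p : ℕ} (X : (i : Fin p) → (Fin i.1 → Bool) → Ω → Bool)
  (Ypo : (Fin p → Bool) → Ω → Bool)

/-- `c(b)` : full intervention on `K` at constant level `b`. -/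
def cvec (K : Finset (Fin p)) (b : Bool) (ω : Ω) : Fin p → Bool :=
  fun i => intX X K (fun _ => b) i ω

/-- `m(b)` : intervention on `K` at the values generated by intervening on `A` at level `b`. -/
def mvec (K A : Finset (Fin p)) (b : Bool) (ω : Ω) : Fin p → Bool :=
  fun i => intX X K (fun j => intX X A (fun _ => b) j ω) i ω

variable {X}

section chains
variable (hXmono : ∀ (i : Fin p) (ω : Ω), Monotone (fun xbar : Fin i.1 → Bool => X i xbar ω))
  (K A : Finset (Fin p)) (ω : Ω)
include hXmono

lemma cvec_le_mvec : cvec X K false ω ≤ mvec X K A false ω := fun i =>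
  intX_mono X hXmono K (fun j => Bool.false_le _) ω i

lemma mvec_le_cvec : mvec X K A true ω ≤ cvec X K true ω := fun i =>
  intX_mono X hXmono K (fun j => Bool.le_true _) ω i

lemma mvec_false_le_obs : mvec X K A false ω ≤ fun i => obsX X i ω := by
  intro i
  have h1 : (fun j => intX X A (fun _ => false) j ω) ≤ fun j => obsX X j ω := by
    intro j
    calc intX X A (fun _ => false) j ω
        ≤ intX X A (fun j' => obsX X j' ω) j ω :=
          intX_mono X hXmono A (fun _ => Bool.false_le _) ω j
      _ = obsX X j ω := intX_obs X A ω (fun _ _ => rfl) j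
  calc intX X K (fun j => intX X A (fun _ => false) j ω) i ω
      ≤ intX X K (fun j => obsX X j ω) i ω := intX_mono X hXmono K h1 ω i
    _ = obsX X i ω := intX_obs X K ω (fun _ _ => rfl) i

lemma obs_le_mvec_true : (fun i => obsX X i ω) ≤ mvec X K A true ω := by
  intro i
  have h1 : (fun j => obsX X j ω) ≤ fun j => intX X A (fun _ => true) j ω := by
    intro j
    calc obsX X j ω = intX X A (fun j' => obsX X j' ω) j ω :=
          (intX_obs X A ω (fun _ _ => rfl) j).symm
      _ ≤ intX X A (fun _ => true) j ω := intX_mono X hXmono A (fun _ => Bool.le_true _) ω j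
  calc obsX X i ω = intX X K (fun j => obsX X j ω) i ω :=
        (intX_obs X K ω (fun _ _ => rfl) i).symm
    _ ≤ intX X K (fun j => intX X A (fun _ => true) j ω) i ω := intX_mono X hXmono K h1 ω i

end chains

section events
variable (hXmono : ∀ (i : Fin p) (ω : Ω), Monotone (fun xbar : Fin i.1 → Bool => X i xbar ω))
  (hYmono : ∀ ω : Ω, Monotone (fun x : Fin p → Bool => Ypo x ω))
  {K A : Finset (Fin p)}
include hXmono hYmono

lemma intY_mono {u u' : Fin p → Bool} (h : u ≤ u') (ω : Ω) :
    intY X Ypo K u ω ≤ intY X Ypo K u' ω :=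
  hYmono ω (fun i => intX_mono X hXmono K h ω i)

lemma causeEvent_iff (hp : 0 < p) (ω : Ω) :
    ω ∈ causeEvent X Ypo K ↔
      (Ypo (cvec X K true ω) ω = true ∧ Ypo (cvec X K false ω) ω = false) := by
  have low : ∀ v : Fin p → Bool,
      intY X Ypo K (fun _ => false) ω ≤ intY X Ypo K v ω := fun v =>
    intY_mono Ypo hXmono hYmono (fun _ => Bool.false_le _) ω
  have high : ∀ v : Fin p → Bool,
      intY X Ypo K v ω ≤ intY X Ypo K (fun _ => true) ω := fun v =>
    intY_mono Ypo hXmono hYmono (fun _ => Bool.le_true _) ω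
  constructor
  · rintro ⟨u, u', hne, hval⟩
    cases h1 : intY X Ypo K (fun _ => true) ω <;> cases h0 : intY X Ypo K (fun _ => false) ω
    · have hall : ∀ v, intY X Ypo K v ω = false := fun v =>
        le_antisymm ((high v).trans h1.le) (Bool.false_le _)
      exact (hval ((hall u).trans (hall u').symm)).elim
    · have := (low (fun _ => true)).trans h1.le
      rw [h0] at this
      exact absurd this (by simp)
    · exact ⟨h1, h0⟩
    · have hall : ∀ v, intY X Ypo K v ω = true := fun v =>
        le_antisymm (Bool.le_true _) (h0 ▸ low v)
      exact (hval ((hall u).trans (hall u').symm)).elim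
  · rintro ⟨h1, h0⟩
    refine ⟨(fun _ => true), (fun _ => false), ?_, ?_⟩
    · intro h; exact absurd (congrFun h ⟨0, hp⟩) (by simp)
    · show intY X Ypo K (fun _ => true) ω ≠ intY X Ypo K (fun _ => false) ω
      rw [show intY X Ypo K (fun _ => true) ω = Ypo (cvec X K true ω) ω from rfl,
        show intY X Ypo K (fun _ => false) ω = Ypo (cvec X K false ω) ω from rfl, h1, h0]
      simp

lemma rootEvent_iff (ω : Ω) :
    ω ∈ rootEvent X Ypo K A ↔
      Ypo (mvec X K A true ω) ω = Ypo (mvec X K A false ω) ω := by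
  constructor
  · intro h; exact h _ _
  · intro h v v'
    have low : ∀ w : Fin p → Bool,
        intY X Ypo K (fun i => intX X A (fun _ => false) i ω) ω
          ≤ intY X Ypo K (fun i => intX X A w i ω) ω := fun w =>
      intY_mono Ypo hXmono hYmono
        (fun i => intX_mono X hXmono A (fun _ => Bool.false_le _) ω i) ω
    have high : ∀ w : Fin p → Bool,
        intY X Ypo K (fun i => intX X A w i ω) ω
          ≤ intY X Ypo K (fun i => intX X A (fun _ => true) i ω) ω := fun w =>
      intY_mono Ypo hXmono hYmono
        (fun i => intX_mono X hXmono A (fun _ => Bool.le_true _) ω i) ω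
    have h10 : intY X Ypo K (fun i => intX X A (fun _ => true) i ω) ω
        = intY X Ypo K (fun i => intX X A (fun _ => false) i ω) ω := h
    exact le_antisymm ((high v).trans (h10.le.trans (low v')))
      ((high v').trans (h10.le.trans (low v)))

end events
end Part2
section Part3
variable {Ω : Type*} {p : ℕ}

lemma mem_olSet {K : Finset (Fin p)} {hK : K.Nonempty} {i : Fin p} :
    i ∈ olSet K hK ↔ i < K.min' hK := by simp [olSet]

lemma mem_hatSet {K : Finset (Fin p)} {hK : K.Nonempty} {i : Fin p} :
    i ∈ hatSet K hK ↔ (K.min' hK < i ∧ i < K.max' hK ∧ i ∉ K) := by simp [hatSet]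

lemma mem_undSet {K : Finset (Fin p)} {hK : K.Nonempty} {i : Fin p} :
    i ∈ undSet K hK ↔ K.max' hK < i := by simp [undSet]

lemma K_not_A {K : Finset (Fin p)} {hK : K.Nonempty} {i : Fin p} (hi : i ∈ K) :
    i ∉ olSet K hK ∪ hatSet K hK := by
  intro h
  rcases Finset.mem_union.1 h with h | h
  · exact absurd (K.min'_le i hi) (not_le.2 (mem_olSet.1 h))
  · exact (mem_hatSet.1 h).2.2 hi

lemma und_not_A {K : Finset (Fin p)} {hK : K.Nonempty} {i : Fin p} (hi : i ∈ undSet K hK) :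
    i ∉ olSet K hK ∪ hatSet K hK := by
  intro h
  have hmax := mem_undSet.1 hi
  rcases Finset.mem_union.1 h with h | h
  · have := mem_olSet.1 h
    exact absurd (this.trans (lt_of_le_of_lt (K.min'_le _ (K.max'_mem hK)) hmax))
      (lt_irrefl i)
  · exact absurd ((mem_hatSet.1 h).2.1.trans hmax) (lt_irrefl i)

lemma K_not_und {K : Finset (Fin p)} {hK : K.Nonempty} {i : Fin p} (hi : i ∈ K) :
    i ∉ undSet K hK := fun h => absurd (K.le_max' i hi) (not_le.2 (mem_undSet.1 h))

lemma classes {K : Finset (Fin p)} {hK : K.Nonempty} (i : Fin p) :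
    i ∈ olSet K hK ∨ i ∈ K ∨ i ∈ hatSet K hK ∨ i ∈ undSet K hK := by
  by_cases h1 : i < K.min' hK
  · exact Or.inl (mem_olSet.2 h1)
  by_cases h2 : i ∈ K
  · exact Or.inr (Or.inl h2)
  by_cases h3 : K.max' hK < i
  · exact Or.inr (Or.inr (Or.inr (mem_undSet.2 h3)))
  refine Or.inr (Or.inr (Or.inl (mem_hatSet.2 ⟨?_, ?_, h2⟩)))
  · exact lt_of_le_of_ne (le_of_not_gt h1) (fun h => h2 (h ▸ K.min'_mem hK))
  · exact lt_of_le_of_ne (le_of_not_gt h3) (fun h => h2 (h ▸ K.max'_mem hK))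

lemma lt_K_mem {K : Finset (Fin p)} {hK : K.Nonempty} {i j : Fin p} (hi : i ∈ K)
    (hj : j < i) (hjA : j ∉ olSet K hK ∪ hatSet K hK) : j ∈ K := by
  rcases classes (K := K) (hK := hK) j with h | h | h | h
  · exact absurd (Finset.mem_union_left _ h) hjA
  · exact h
  · exact absurd (Finset.mem_union_right _ h) hjA
  · exact absurd (hj.trans_le (K.le_max' i hi)) (not_lt.2 (mem_undSet.1 h).le)

variable (X : (i : Fin p) → (Fin i.1 → Bool) → Ω → Bool)

/-- the vector `x''` built from `q`. -/
def xppv (K und : Finset (Fin p)) (q : (Fin p → Bool) × (Fin p → Bool)) : Fin p → Bool :=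
  fun j => if j ∈ K ∪ und then q.2 j else false

/-- the per-coordinate condition set. -/
def Dset (K : Finset (Fin p)) (hK : K.Nonempty) (x : Fin p → Bool)
    (q : (Fin p → Bool) × (Fin p → Bool)) (i : Fin p) : Set Ω :=
  {ω | X i (pre x i) ω = x i} ∩
    (if i ∈ K then {ω | X i (pre (xppv K (undSet K hK) q) i) ω = q.2 i}
     else if i ∈ olSet K hK then Set.univ
     else ({ω | X i (pre q.2 i) ω = q.2 i} ∩ {ω | X i (pre q.1 i) ω = q.1 i}))

/-- the event `{X = x, c(0) = x*, m(0) = x'}`. -/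
def Eset (K A : Finset (Fin p)) (x : Fin p → Bool)
    (q : (Fin p → Bool) × (Fin p → Bool)) : Set Ω :=
  {ω | ∀ i, obsX X i ω = x i ∧ cvec X K false ω i = q.1 i ∧ mvec X K A false ω i = q.2 i}

/-- the constraints from the summation filter. -/
def Qok (K : Finset (Fin p)) (hK : K.Nonempty) (x : Fin p → Bool)
    (q : (Fin p → Bool) × (Fin p → Bool)) : Prop :=
  q.1 ≤ q.2 ∧ q.2 ≤ x ∧ (∀ j ∈ olSet K hK, q.1 j = x j ∧ q.2 j = x j) ∧
    (∀ i ∈ K, q.1 i = false)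

variable {X}

lemma obsX_prefix {x : Fin p → Bool} {i : Fin p} {ω : Ω}
    (h : ∀ j : Fin p, j.1 < i.1 → obsX X j ω = x j) :
    obsX X i ω = X i (pre x i) ω := by
  rw [obsX_apply]
  congr 1
  exact funext fun j => h _ j.isLt

lemma cvec_prefix {K : Finset (Fin p)} {q1 : Fin p → Bool} {i : Fin p} {ω : Ω}
    (hiK : i ∉ K) (h : ∀ j : Fin p, j.1 < i.1 → cvec X K false ω j = q1 j) :
    cvec X K false ω i = X i (pre q1 i) ω := by
  show intX X K (fun _ => false) i ω = _
  rw [intX_not_mem X _ hiK]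
  congr 1
  exact funext fun j => h _ j.isLt

lemma mvec_prefix {K A : Finset (Fin p)} {q2 : Fin p → Bool} {i : Fin p} {ω : Ω}
    (hiK : i ∉ K) (h : ∀ j : Fin p, j.1 < i.1 → mvec X K A false ω j = q2 j) :
    mvec X K A false ω i = X i (pre q2 i) ω := by
  show intX X K (fun j => intX X A (fun _ => false) j ω) i ω = _
  rw [intX_not_mem X _ hiK]
  congr 1
  exact funext fun j => h _ j.isLt

lemma mvec_prefix_K {K : Finset (Fin p)} {hK : K.Nonempty}
    {q : (Fin p → Bool) × (Fin p → Bool)} {i : Fin p} {ω : Ω} (hiK : i ∈ K)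
    (h : ∀ j : Fin p, j.1 < i.1 → mvec X K (olSet K hK ∪ hatSet K hK) false ω j = q.2 j) :
    mvec X K (olSet K hK ∪ hatSet K hK) false ω i
      = X i (pre (xppv K (undSet K hK) q) i) ω := by
  set A := olSet K hK ∪ hatSet K hK with hA
  show intX X K (fun j => intX X A (fun _ => false) j ω) i ω = _
  rw [intX_mem X _ hiK, intX_not_mem X _ (hA ▸ K_not_A hiK)]
  congr 1
  funext j
  set j' : Fin p := ⟨j.1, lt_trans j.isLt i.isLt⟩ with hj'
  show intX X A (fun _ => false) j' ω = xppv K (undSet K hK) q j'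
  by_cases hjA : j' ∈ A
  · rw [intX_mem X _ hjA]
    have h1 : j' ∉ K ∪ undSet K hK := by
      intro hmem
      rcases Finset.mem_union.1 hmem with hm | hm
      · exact K_not_A hm hjA
      · exact und_not_A hm hjA
    rw [xppv, if_neg h1]
  · have hjK : j' ∈ K := lt_K_mem hiK (show j' < i from j.isLt) hjA
    rw [intX_not_mem X _ hjA]
    have h2 : mvec X K A false ω j' = q.2 j' := h j' j.isLt
    have h3 : mvec X K A false ω j' = intX X A (fun _ => false) j' ω := by
      show intX X K (fun j => intX X A (fun _ => false) j ω) j' ω = _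
      rw [intX_mem X _ hjK]
    rw [← intX_not_mem X (S := A) (fun _ => false) hjA, ← h3, h2, xppv,
      if_pos (Finset.mem_union_left _ hjK)]

lemma Eset_eq {K : Finset (Fin p)} {hK : K.Nonempty} {x : Fin p → Bool}
    {q : (Fin p → Bool) × (Fin p → Bool)} (hq : Qok K hK x q) :
    Eset X K (olSet K hK ∪ hatSet K hK) x q = ⋂ i, Dset X K hK x q i := by
  set A := olSet K hK ∪ hatSet K hK with hA
  ext ω
  simp only [Set.mem_iInter]
  constructor
  · intro hω i
    refine ⟨?_, ?_⟩
    · exact (obsX_prefix (fun j _ => (hω j).1)).symm.trans (hω i).1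
    · by_cases hiK : i ∈ K
      · rw [if_pos hiK]
        exact (mvec_prefix_K hiK (fun j hj => (hω j).2.2)).symm.trans (hω i).2.2
      · rw [if_neg hiK]
        by_cases hiol : i ∈ olSet K hK
        · rw [if_pos hiol]; trivial
        · rw [if_neg hiol]
          exact ⟨(mvec_prefix hiK (fun j hj => (hω j).2.2)).symm.trans (hω i).2.2,
            (cvec_prefix hiK (fun j hj => (hω j).2.1)).symm.trans (hω i).2.1⟩
  · intro hω
    refine finStrongInd (fun i IH => ?_)
    obtain ⟨hD1, hD2⟩ := hω i
    have hobs : obsX X i ω = x i := (obsX_prefix (fun j hj => (IH j hj).1)).trans hD1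
    have hlowK : i ∈ olSet K hK → ∀ k ∈ K, i < k := fun hiol k hk =>
      lt_of_lt_of_le (mem_olSet.1 hiol) (K.min'_le k hk)
    refine ⟨hobs, ?_, ?_⟩
    · by_cases hiK : i ∈ K
      · show intX X K (fun _ => false) i ω = q.1 i
        rw [intX_mem X _ hiK, (hq.2.2.2 i hiK)]
      · by_cases hiol : i ∈ olSet K hK
        · show intX X K (fun _ => false) i ω = q.1 i
          rw [intX_low X K _ ω i (hlowK hiol), hobs, (hq.2.2.1 i hiol).1]
        · rw [if_neg hiK, if_neg hiol] at hD2
          exact (cvec_prefix hiK (fun j hj => (IH j hj).2.1)).trans hD2.2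
    · by_cases hiK : i ∈ K
      · rw [if_pos hiK] at hD2
        exact (mvec_prefix_K hiK (fun j hj => (IH j hj).2.2)).trans hD2
      · by_cases hiol : i ∈ olSet K hK
        · show intX X K (fun j => intX X A (fun _ => false) j ω) i ω = q.2 i
          rw [intX_low X K _ ω i (hlowK hiol), hobs, (hq.2.2.1 i hiol).2]
        · rw [if_neg hiK, if_neg hiol] at hD2
          exact (mvec_prefix hiK (fun j hj => (IH j hj).2.2)).trans hD2.1

lemma Qok_of_mem_Eset
    (hXmono : ∀ (i : Fin p) (ω : Ω), Monotone (fun xbar : Fin i.1 → Bool => X i xbar ω))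
    {K : Finset (Fin p)} {hK : K.Nonempty} {x : Fin p → Bool}
    {q : (Fin p → Bool) × (Fin p → Bool)} {ω : Ω}
    (hω : ω ∈ Eset X K (olSet K hK ∪ hatSet K hK) x q) : Qok K hK x q := by
  set A := olSet K hK ∪ hatSet K hK with hA
  have hlowK : ∀ i ∈ olSet K hK, ∀ k ∈ K, i < k := fun i hiol k hk =>
    lt_of_lt_of_le (mem_olSet.1 hiol) (K.min'_le k hk)
  refine ⟨?_, ?_, ?_, ?_⟩
  · intro i
    rw [← (hω i).2.1, ← (hω i).2.2]
    exact cvec_le_mvec hXmono K A ω i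
  · intro i
    rw [← (hω i).2.2, ← (hω i).1]
    exact mvec_false_le_obs hXmono K A ω i
  · intro j hj
    constructor
    · rw [← (hω j).2.1, ← (hω j).1]
      show intX X K (fun _ => false) j ω = _
      rw [intX_low X K _ ω j (hlowK j hj)]
    · rw [← (hω j).2.2, ← (hω j).1]
      show intX X K (fun j' => intX X A (fun _ => false) j' ω) j ω = _
      rw [intX_low X K _ ω j (hlowK j hj)]
  · intro i hi
    rw [← (hω i).2.1]
    show intX X K (fun _ => false) i ω = false
    rw [intX_mem X _ hi]

lemma Eset_injective {K A : Finset (Fin p)} {x : Fin p → Bool}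
    {q q' : (Fin p → Bool) × (Fin p → Bool)} {ω : Ω}
    (h1 : ω ∈ Eset X K A x q) (h2 : ω ∈ Eset X K A x q') : q = q' := by
  refine Prod.ext (funext fun i => ?_) (funext fun i => ?_)
  · rw [← (h1 i).2.1, (h2 i).2.1]
  · rw [← (h1 i).2.2, (h2 i).2.2]

end Part3
section Part4
variable {Ω : Type*} {p : ℕ} {X : (i : Fin p) → (Fin i.1 → Bool) → Ω → Bool}
  {Ypo : (Fin p → Bool) → Ω → Bool}
  (hXmono : ∀ (i : Fin p) (ω : Ω), Monotone (fun xbar : Fin i.1 → Bool => X i xbar ω))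
  (hYmono : ∀ ω : Ω, Monotone (fun x : Fin p → Bool => Ypo x ω))
  {K : Finset (Fin p)} {hK : K.Nonempty} {x : Fin p → Bool}

include hXmono hYmono

lemma mainSetEq :
    causeEvent X Ypo K ∩ rootEvent X Ypo K (olSet K hK ∪ hatSet K hK) ∩
        (evX X x ∩ {ω | obsY X Ypo ω = true}) =
      ⋃ q ∈ Finset.univ.filter (fun q : (Fin p → Bool) × (Fin p → Bool) => Qok K hK x q),
        (Eset X K (olSet K hK ∪ hatSet K hK) x q ∩
          ({ω | Ypo q.2 ω = true} ∩ {ω | Ypo q.1 ω = false})) := by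
  set A := olSet K hK ∪ hatSet K hK with hA
  have hp : 0 < p := (hK.choose).pos
  ext ω
  simp only [Set.mem_iUnion, Set.mem_inter_iff, Finset.mem_filter, Finset.mem_univ,
    true_and, exists_prop]
  constructor
  · rintro ⟨⟨hC, hR⟩, hBx, hBy⟩
    have hBx' : ∀ i, obsX X i ω = x i := hBx
    have hxfun : (fun i => obsX X i ω) = x := funext hBx'
    set q : (Fin p → Bool) × (Fin p → Bool) :=
      (cvec X K false ω, mvec X K A false ω) with hqdef
    have hE : ω ∈ Eset X K A x q := fun i => ⟨hBx' i, rfl, rfl⟩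
    have hYx : Ypo x ω = true := by
      have hBy' : Ypo (fun i => obsX X i ω) ω = true := hBy
      rw [hxfun] at hBy'
      exact hBy'
    have hCc := (causeEvent_iff Ypo hXmono hYmono hp ω).1 hC
    have hRr := (rootEvent_iff Ypo hXmono hYmono (A := A) ω).1 hR
    have hm1 : Ypo (mvec X K A true ω) ω = true := by
      have hle : x ≤ mvec X K A true ω := hxfun ▸ obs_le_mvec_true hXmono K A ω
      have h2 : Ypo x ω ≤ Ypo (mvec X K A true ω) ω := hYmono ω hle
      rw [hYx] at h2
      exact le_antisymm (Bool.le_true _) h2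
    refine ⟨q, Qok_of_mem_Eset hXmono hE, hE, ?_, hCc.2⟩
    show Ypo (mvec X K A false ω) ω = true
    rw [← hRr, hm1]
  · rintro ⟨q, hq, hE, hY2, hY1⟩
    have hBx' : ∀ i, obsX X i ω = x i := fun i => (hE i).1
    have hxfun : (fun i => obsX X i ω) = x := funext hBx'
    have hmfun : mvec X K A false ω = q.2 := funext fun i => (hE i).2.2
    have hcfun : cvec X K false ω = q.1 := funext fun i => (hE i).2.1
    have hYx : Ypo x ω = true :=
      le_antisymm (Bool.le_true _) (hY2 ▸ hYmono ω hq.2.1)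
    have hBy : obsY X Ypo ω = true := by
      show Ypo (fun i => obsX X i ω) ω = true
      rw [hxfun]; exact hYx
    have hm1 : Ypo (mvec X K A true ω) ω = true := by
      have hle : x ≤ mvec X K A true ω := hxfun ▸ obs_le_mvec_true hXmono K A ω
      have h2 : Ypo x ω ≤ Ypo (mvec X K A true ω) ω := hYmono ω hle
      rw [hYx] at h2
      exact le_antisymm (Bool.le_true _) h2
    have hc1 : Ypo (cvec X K true ω) ω = true := by
      have hle : mvec X K A true ω ≤ cvec X K true ω := mvec_le_cvec hXmono K A ω
      have h2 : Ypo (mvec X K A true ω) ω ≤ Ypo (cvec X K true ω) ω := hYmono ω hle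
      rw [hm1] at h2
      exact le_antisymm (Bool.le_true _) h2
    refine ⟨⟨?_, ?_⟩, hBx', hBy⟩
    · exact (causeEvent_iff Ypo hXmono hYmono hp ω).2 ⟨hc1, hcfun ▸ hY1⟩
    · refine (rootEvent_iff Ypo hXmono hYmono (A := A) ω).2 ?_
      rw [hm1, hmfun, hY2]

end Part4
section Part5
variable {Ω : Type*} [MeasurableSpace Ω] {p : ℕ}
  {X : (i : Fin p) → (Fin i.1 → Bool) → Ω → Bool} {Ypo : (Fin p → Bool) → Ω → Bool}

lemma measLe {m1 m2 : MeasurableSpace Ω} (h : m1 ≤ m2) {s : Set Ω}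
    (hs : MeasurableSet[m1] s) : MeasurableSet[m2] s := h _ hs

lemma poSigma_le (hXmeas : ∀ (i : Fin p) (xbar : Fin i.1 → Bool), Measurable (X i xbar))
    (hYmeas : ∀ w : Fin p → Bool, Measurable (Ypo w)) :
    ∀ n, poSigma X Ypo n ≤ ‹MeasurableSpace Ω› := by
  intro n
  rw [poSigma]
  split_ifs with h
  · exact iSup_le fun xbar => (hXmeas ⟨n.1, h⟩ xbar).comap_le
  · exact iSup_le fun w => (hYmeas w).comap_le

lemma poSigma_castSucc (i : Fin p) :
    poSigma X Ypo i.castSucc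
      = ⨆ xbar : Fin i.1 → Bool, MeasurableSpace.comap (X i xbar) inferInstance := by
  rw [poSigma, dif_pos (show (i.castSucc : Fin (p+1)).1 < p from i.isLt)]
  rfl

lemma poSigma_last :
    poSigma X Ypo (Fin.last p)
      = ⨆ w : Fin p → Bool, MeasurableSpace.comap (Ypo w) inferInstance := by
  rw [poSigma, dif_neg (show ¬(Fin.last p).1 < p from lt_irrefl p)]

lemma measSet_X (i : Fin p) (xbar : Fin i.1 → Bool) (c : Bool) :
    MeasurableSet[poSigma X Ypo i.castSucc] {ω | X i xbar ω = c} := by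
  rw [poSigma_castSucc]
  refine measLe (le_iSup _ xbar) ?_
  exact ⟨{c}, trivial, rfl⟩

lemma measSet_Y (w : Fin p → Bool) (c : Bool) :
    MeasurableSet[poSigma X Ypo (Fin.last p)] {ω | Ypo w ω = c} := by
  rw [poSigma_last]
  refine measLe (le_iSup _ w) ?_
  exact ⟨{c}, trivial, rfl⟩

/-- the σ-algebra generated by all the `X`-families. -/
noncomputable def mX (X : (i : Fin p) → (Fin i.1 → Bool) → Ω → Bool) (Ypo : (Fin p → Bool) → Ω → Bool) :
    MeasurableSpace Ω :=
  ⨆ n ∈ ({Fin.last p}ᶜ : Set (Fin (p + 1))), poSigma X Ypo n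

lemma poSigma_le_mX (i : Fin p) : poSigma X Ypo i.castSucc ≤ mX X Ypo :=
  le_biSup _ (by simp [Fin.ext_iff]; omega)

variable (μ : Measure Ω) [IsProbabilityMeasure μ]
  (hXmeas : ∀ (i : Fin p) (xbar : Fin i.1 → Bool), Measurable (X i xbar))
  (hYmeas : ∀ w : Fin p → Bool, Measurable (Ypo w))
  (hindep : iIndep (poSigma X Ypo) μ)

include hXmeas hYmeas hindep in
lemma indepXY : Indep (mX X Ypo) (poSigma X Ypo (Fin.last p)) μ := by
  have h := indep_biSup_compl (poSigma_le hXmeas hYmeas) hindep ({Fin.last p}ᶜ)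
  rw [compl_compl] at h
  have h2 : (⨆ n ∈ ({Fin.last p} : Set (Fin (p + 1))), poSigma X Ypo n)
      = poSigma X Ypo (Fin.last p) := by simp
  rwa [h2] at h

include hindep in
lemma meas_iInter_prod {D : Fin p → Set Ω}
    (hD : ∀ i, MeasurableSet[poSigma X Ypo i.castSucc] (D i)) :
    μ (⋂ i, D i) = ∏ i, μ (D i) := by
  classical
  set f : Fin (p + 1) → Set Ω := fun n => if h : n.1 < p then D ⟨n.1, h⟩ else Set.univ with hf
  have hfc : ∀ i : Fin p, f i.castSucc = D i := fun i => dif_pos i.isLt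
  have hmeas : ∀ n ∈ Finset.univ.image Fin.castSucc, MeasurableSet[poSigma X Ypo n] (f n) := by
    intro n hn
    obtain ⟨i, _, rfl⟩ := Finset.mem_image.1 hn
    rw [hfc]
    exact hD i
  have h := hindep.meas_biInter hmeas
  have h1 : (⋂ n ∈ Finset.univ.image Fin.castSucc, f n) = ⋂ i, D i := by
    ext ω
    simp only [Set.mem_iInter, Finset.mem_image, Finset.mem_univ, true_and]
    constructor
    · intro h i
      rw [← hfc i]
      exact h _ ⟨i, rfl⟩
    · rintro h n ⟨i, rfl⟩
      rw [hfc i]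
      exact h i
  have h2 : (∏ n ∈ Finset.univ.image Fin.castSucc, μ (f n)) = ∏ i, μ (D i) := by
    rw [Finset.prod_image (fun a _ b _ h => Fin.castSucc_injective p h)]
    exact Finset.prod_congr rfl fun i _ => by rw [hfc]
  rw [h1] at h
  rw [h, h2]

/-- the σ-algebra of the families with index `< i`. -/
noncomputable def mlt (X : (i : Fin p) → (Fin i.1 → Bool) → Ω → Bool) (Ypo : (Fin p → Bool) → Ω → Bool)
    (i : Fin p) : MeasurableSpace Ω :=
  ⨆ n ∈ {n : Fin (p + 1) | n.1 < i.1}, poSigma X Ypo n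

include hXmeas hYmeas hindep in
lemma indep_mlt (i : Fin p) : Indep (mlt X Ypo i) (poSigma X Ypo i.castSucc) μ := by
  have h := indep_biSup_compl (poSigma_le hXmeas hYmeas) hindep {n : Fin (p+1) | n ≠ i.castSucc}
  have h2 : (⨆ n ∈ ({n : Fin (p+1) | n ≠ i.castSucc}ᶜ : Set (Fin (p+1))), poSigma X Ypo n)
      = poSigma X Ypo i.castSucc := by
    have : ({n : Fin (p+1) | n ≠ i.castSucc}ᶜ : Set (Fin (p+1))) = {i.castSucc} := by
      ext n; simp
    rw [this]; simp
  rw [h2] at h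
  refine indep_of_indep_of_le_left h ?_
  refine biSup_mono ?_
  intro n hn
  simp only [Set.mem_setOf_eq] at hn ⊢
  intro he
  rw [he, Fin.coe_castSucc] at hn
  exact lt_irrefl _ hn

lemma obsX_measLe (j : Fin p) (c : Bool) :
    MeasurableSet[⨆ n ∈ {n : Fin (p + 1) | n.1 ≤ j.1}, poSigma X Ypo n]
      {ω | obsX X j ω = c} := by
  induction' j using Stmt4.finStrongInd with j IH generalizing c
  have hset : {ω | obsX X j ω = c} = ⋃ xbar : Fin j.1 → Bool,
      ((⋂ j' : Fin j.1, {ω | obsX X ⟨j'.1, lt_trans j'.isLt j.isLt⟩ ω = xbar j'}) ∩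
        {ω | X j xbar ω = c}) := by
    ext ω
    simp only [Set.mem_iUnion, Set.mem_iInter, Set.mem_inter_iff, Set.mem_setOf_eq]
    constructor
    · intro h
      exact ⟨fun j' => obsX X ⟨j'.1, lt_trans j'.isLt j.isLt⟩ ω, fun j' => rfl,
        (obsX_apply X j ω).symm.trans h⟩
    · rintro ⟨xbar, hpre, hX⟩
      rw [obsX_apply, show (fun j' => obsX X ⟨j'.1, lt_trans j'.isLt j.isLt⟩ ω) = xbar from
        funext hpre]
      exact hX
  rw [hset]
  refine MeasurableSet.iUnion fun xbar => MeasurableSet.inter ?_ ?_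
  · refine MeasurableSet.iInter fun j' => ?_
    refine measLe (biSup_mono ?_) (IH ⟨j'.1, lt_trans j'.isLt j.isLt⟩ j'.isLt (xbar j'))
    intro n hn
    simp only [Set.mem_setOf_eq] at hn ⊢
    exact hn.trans (le_of_lt j'.isLt)
  · refine measLe (le_biSup _ ?_) (measSet_X j xbar c)
    simp

lemma evPrefix_measLe (i : Fin p) (w : Fin p → Bool) :
    MeasurableSet[mlt X Ypo i] (evPrefix X i w) := by
  classical
  have hset : evPrefix X i w
      = ⋂ j : Fin p, (if j < i then {ω | obsX X j ω = w j} else Set.univ) := by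
    ext ω
    simp only [Set.mem_iInter, evPrefix, Set.mem_setOf_eq]
    constructor
    · intro h j
      split_ifs with hj
      · exact h j hj
      · trivial
    · intro h j hj
      have := h j
      rwa [if_pos hj] at this
  rw [hset]
  refine MeasurableSet.iInter fun j => ?_
  split_ifs with hj
  · refine measLe (biSup_mono ?_) (obsX_measLe j (w j))
    intro n hn
    simp only [Set.mem_setOf_eq] at hn ⊢
    exact lt_of_le_of_lt hn hj
  · exact MeasurableSet.univ

include hXmeas hYmeas hindep in
lemma prX_eq (hpos2 : ∀ w : Fin p → Bool, 0 < μ (evX X w)) (i : Fin p) (w : Fin p → Bool) :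
    prX μ X i w = (μ {ω | X i (pre w i) ω = true}).toReal := by
  have hset : {ω | obsX X i ω = true} ∩ evPrefix X i w
      = {ω | X i (pre w i) ω = true} ∩ evPrefix X i w := by
    ext ω
    simp only [Set.mem_inter_iff, Set.mem_setOf_eq, and_congr_left_iff]
    intro hω
    rw [obsX_prefix (x := w) (fun j hj => hω ⟨j.1, j.2⟩ hj)]
  have hind := (Indep_iff _ _ _).1 (indep_mlt μ hXmeas hYmeas hindep i)
    (evPrefix X i w) {ω | X i (pre w i) ω = true}
    (evPrefix_measLe i w) (measSet_X i (pre w i) true)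
  have hne : μ (evPrefix X i w) ≠ 0 := by
    refine (lt_of_lt_of_le (hpos2 w) (measure_mono ?_)).ne'
    intro ω hω j hj
    exact hω j
  have hnetop : μ (evPrefix X i w) ≠ ⊤ := measure_ne_top μ _
  rw [prX, condProb, hset, Set.inter_comm, hind, ENNReal.toReal_mul, mul_comm,
    mul_div_assoc, div_self (by simp [ENNReal.toReal_ne_zero, hne, hnetop]), mul_one]

lemma evX_eq (w : Fin p → Bool) :
    evX X w = ⋂ i, {ω | X i (pre w i) ω = w i} := by
  ext ω
  simp only [Set.mem_iInter, evX, Set.mem_setOf_eq]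
  constructor
  · intro h i
    exact (obsX_prefix (fun j hj => h j)).symm.trans (h i)
  · intro h
    refine finStrongInd (fun i IH => ?_)
    exact (obsX_prefix IH).trans (h i)

include hindep in
lemma evX_measure (w : Fin p → Bool) :
    μ (evX X w) = ∏ i, μ {ω | X i (pre w i) ω = w i} := by
  rw [evX_eq]
  exact meas_iInter_prod μ hindep (fun i => measSet_X i (pre w i) (w i))

lemma evX_mem_mX (w : Fin p → Bool) : MeasurableSet[mX X Ypo] (evX X w) := by
  rw [evX_eq]
  exact MeasurableSet.iInter fun i => measLe (poSigma_le_mX i) (measSet_X i (pre w i) (w i))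

include hXmeas hYmeas hindep in
lemma condY_eq (hpos2 : ∀ w : Fin p → Bool, 0 < μ (evX X w)) (w : Fin p → Bool) :
    condProb μ {ω | obsY X Ypo ω = true} (evX X w) = (μ {ω | Ypo w ω = true}).toReal := by
  have hset : {ω | obsY X Ypo ω = true} ∩ evX X w = {ω | Ypo w ω = true} ∩ evX X w := by
    ext ω
    simp only [Set.mem_inter_iff, Set.mem_setOf_eq, and_congr_left_iff]
    intro hω
    have hfun : (fun i => obsX X i ω) = w := funext hω
    show obsY X Ypo ω = true ↔ _
    rw [show obsY X Ypo ω = Ypo (fun i => obsX X i ω) ω from rfl, hfun]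
  have hind := (Indep_iff _ _ _).1 (indepXY μ hXmeas hYmeas hindep)
    (evX X w) {ω | Ypo w ω = true} (evX_mem_mX w) (measSet_Y w true)
  have hne : μ (evX X w) ≠ 0 := (hpos2 w).ne'
  have hnetop : μ (evX X w) ≠ ⊤ := measure_ne_top μ _
  rw [condProb, hset, Set.inter_comm, hind, ENNReal.toReal_mul, mul_comm,
    mul_div_assoc, div_self (by simp [ENNReal.toReal_ne_zero, hne, hnetop]), mul_one]

end Part5
section Part6
variable {Ω : Type*} [MeasurableSpace Ω] {p : ℕ}
  {X : (i : Fin p) → (Fin i.1 → Bool) → Ω → Bool} {Ypo : (Fin p → Bool) → Ω → Bool}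
  (μ : Measure Ω) [IsProbabilityMeasure μ]

section helpers
variable (hXmeas : ∀ (i : Fin p) (xbar : Fin i.1 → Bool), Measurable (X i xbar))
  (hXmono : ∀ (i : Fin p) (ω : Ω), Monotone (fun xbar : Fin i.1 → Bool => X i xbar ω))

lemma bool_le_eq_true {a b : Bool} (h : a ≤ b) (ha : a = true) : b = true :=
  le_antisymm (Bool.le_true _) (ha ▸ h)

lemma bool_le_eq_false {a b : Bool} (h : a ≤ b) (hb : b = false) : a = false :=
  le_antisymm (hb ▸ h) (Bool.false_le _)

include hXmeas in
lemma measX_set (i : Fin p) (b : Fin i.1 → Bool) (c : Bool) :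
    MeasurableSet {ω | X i b ω = c} :=
  hXmeas i b (measurableSet_singleton c)

include hXmono in
lemma subTrue {i : Fin p} {b b' : Fin p → Bool} (h : b ≤ b') :
    {ω | X i (pre b i) ω = true} ⊆ {ω | X i (pre b' i) ω = true} := by
  intro ω hω
  have hle : X i (pre b i) ω ≤ X i (pre b' i) ω :=
    hXmono i ω (fun j => h _)
  exact bool_le_eq_true hle hω

include hXmono in
lemma subFalse {i : Fin p} {b b' : Fin p → Bool} (h : b ≤ b') :
    {ω | X i (pre b' i) ω = false} ⊆ {ω | X i (pre b i) ω = false} := by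
  intro ω hω
  have hle : X i (pre b i) ω ≤ X i (pre b' i) ω :=
    hXmono i ω (fun j => h _)
  exact bool_le_eq_false hle hω

lemma false_set_eq (i : Fin p) (b : Fin i.1 → Bool) :
    {ω | X i b ω = false} = {ω | X i b ω = true}ᶜ := by
  ext ω; simp

include hXmeas in
lemma toReal_false (i : Fin p) (b : Fin i.1 → Bool) :
    (μ {ω | X i b ω = false}).toReal = 1 - (μ {ω | X i b ω = true}).toReal := by
  rw [false_set_eq, measure_compl (measX_set hXmeas i b true) (measure_ne_top μ _),
    ENNReal.toReal_sub_of_le (measure_mono (Set.subset_univ _)) (measure_ne_top μ _)]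
  simp

include hXmeas hXmono in
lemma toReal_tf {i : Fin p} {b b' : Fin p → Bool} (h : b ≤ b') :
    (μ ({ω | X i (pre b' i) ω = true} ∩ {ω | X i (pre b i) ω = false})).toReal
      = (μ {ω | X i (pre b' i) ω = true}).toReal
        - (μ {ω | X i (pre b i) ω = true}).toReal := by
  rw [false_set_eq, ← Set.diff_eq,
    measure_diff (subTrue hXmono h) (measX_set hXmeas i (pre b i) true).nullMeasurableSet
      (measure_ne_top μ _),
    ENNReal.toReal_sub_of_le (measure_mono (subTrue hXmono h)) (measure_ne_top μ _)]

end helpers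

section Dmeas
variable (hXmeas : ∀ (i : Fin p) (xbar : Fin i.1 → Bool), Measurable (X i xbar))
  (hXmono : ∀ (i : Fin p) (ω : Ω), Monotone (fun xbar : Fin i.1 → Bool => X i xbar ω))
  {K : Finset (Fin p)} {hK : K.Nonempty} {x : Fin p → Bool}
  {q : (Fin p → Bool) × (Fin p → Bool)}

lemma xppv_le_x (hq : Qok K hK x q) : xppv K (undSet K hK) q ≤ x := by
  intro j
  rw [xppv]
  split_ifs with h
  · exact hq.2.1 j
  · exact Bool.false_le _

include hXmeas hXmono in
lemma Dmeas_K (hq : Qok K hK x q) {i : Fin p} (hiK : i ∈ K)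
    (hF : x i = true → (μ {ω | X i (pre x i) ω = true}).toReal ≠ 0) :
    (μ (Dset X K hK x q i)).toReal
      = (μ {ω | X i (pre x i) ω = x i}).toReal *
          ((1 - bR (q.2 i)) + bR (x i) * (2 * bR (q.2 i) - 1) *
            ((μ {ω | X i (pre (xppv K (undSet K hK) q) i) ω = true}).toReal /
              (μ {ω | X i (pre x i) ω = true}).toReal)) := by
  have hxpp : xppv K (undSet K hK) q ≤ x := xppv_le_x hq
  rw [Dset, if_pos hiK]
  cases hxi : x i with
  | false =>
    have hq2 : q.2 i = false := bool_le_eq_false (hq.2.1 i) hxi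
    rw [hq2]
    have hss : {ω | X i (pre x i) ω = false} ⊆
        {ω | X i (pre (xppv K (undSet K hK) q) i) ω = false} := subFalse hXmono hxpp
    rw [Set.inter_eq_self_of_subset_left hss]
    simp [bR]
  | true =>
    cases hq2 : q.2 i with
    | true =>
      rw [Set.inter_eq_self_of_subset_right (subTrue hXmono hxpp)]
      simp only [bR, if_true]
      field_simp [hF hxi]
      try ring
      try norm_num
    | false =>
      rw [toReal_tf μ hXmeas hXmono hxpp]
      simp only [bR, if_true, if_false, Bool.false_eq_true]
      field_simp [hF hxi]
      try ring

include hXmeas hXmono in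
lemma Dmeas_ol {i : Fin p} (hiK : i ∉ K) (hiol : i ∈ olSet K hK) :
    (μ (Dset X K hK x q i)).toReal = (μ {ω | X i (pre x i) ω = x i}).toReal := by
  rw [Dset, if_neg hiK, if_pos hiol, Set.inter_univ]

include hXmeas hXmono in
lemma Dmeas_hu (hq : Qok K hK x q) {i : Fin p} (hiK : i ∉ K) (hiol : i ∉ olSet K hK)
    (hF : x i = true → (μ {ω | X i (pre x i) ω = true}).toReal ≠ 0) :
    (μ (Dset X K hK x q i)).toReal
      = (μ {ω | X i (pre x i) ω = x i}).toReal *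
          ((1 - bR (q.2 i)) * (1 - bR (q.1 i)) +
            bR (x i) * (2 * bR (q.2 i) - 1) * (1 - bR (q.1 i)) *
              ((μ {ω | X i (pre q.2 i) ω = true}).toReal /
                (μ {ω | X i (pre x i) ω = true}).toReal) +
            bR (x i) * bR (q.2 i) * (2 * bR (q.1 i) - 1) *
              ((μ {ω | X i (pre q.1 i) ω = true}).toReal /
                (μ {ω | X i (pre x i) ω = true}).toReal)) := by
  have h12 : q.1 ≤ q.2 := hq.1
  have h2x : q.2 ≤ x := hq.2.1
  rw [Dset, if_neg hiK, if_neg hiol]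
  cases hxi : x i with
  | false =>
    have hq2 : q.2 i = false := bool_le_eq_false (h2x i) hxi
    have hq1 : q.1 i = false := bool_le_eq_false (h12 i) hq2
    rw [hq2, hq1]
    rw [Set.inter_eq_self_of_subset_left (subFalse hXmono h12),
      Set.inter_eq_self_of_subset_left (subFalse hXmono h2x)]
    simp [bR]
  | true =>
    cases hq2 : q.2 i with
    | true =>
      cases hq1 : q.1 i with
      | true =>
        rw [Set.inter_eq_self_of_subset_right (subTrue hXmono h12),
          Set.inter_eq_self_of_subset_right
            (Set.Subset.trans (subTrue hXmono h12) (subTrue hXmono h2x))]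
        simp only [bR, if_true]
        field_simp [hF hxi]
        try ring
        try norm_num
      | false =>
        rw [← Set.inter_assoc,
          Set.inter_eq_self_of_subset_right (subTrue hXmono h2x),
          toReal_tf μ hXmeas hXmono h12]
        simp only [bR, if_true, if_false]
        field_simp [hF hxi]
        try ring
        try norm_num
    | false =>
      have hq1 : q.1 i = false := bool_le_eq_false (h12 i) hq2
      rw [hq1]
      rw [Set.inter_eq_self_of_subset_left (subFalse hXmono h12),
        toReal_tf μ hXmeas hXmono h2x]
      simp only [bR, if_true, if_false, Bool.false_eq_true]
      field_simp [hF hxi]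
      try ring

lemma Dset_poSigma {q : (Fin p → Bool) × (Fin p → Bool)} (i : Fin p) :
    MeasurableSet[poSigma X Ypo i.castSucc] (Dset X K hK x q i) := by
  classical
  refine MeasurableSet.inter (measSet_X i (pre x i) (x i)) ?_
  split_ifs with h1 h2
  · exact measSet_X i _ (q.2 i)
  · exact MeasurableSet.univ
  · exact MeasurableSet.inter (measSet_X i _ (q.2 i)) (measSet_X i _ (q.1 i))

end Dmeas
end Part6
section Part6b
variable {Ω : Type*} [MeasurableSpace Ω] {p : ℕ}
  {X : (i : Fin p) → (Fin i.1 → Bool) → Ω → Bool} {Ypo : (Fin p → Bool) → Ω → Bool}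
  (μ : Measure Ω) [IsProbabilityMeasure μ]
  (hXmeas : ∀ (i : Fin p) (xbar : Fin i.1 → Bool), Measurable (X i xbar))
  (hXmono : ∀ (i : Fin p) (ω : Ω), Monotone (fun xbar : Fin i.1 → Bool => X i xbar ω))
  {K : Finset (Fin p)} {hK : K.Nonempty} {x : Fin p → Bool}
  {q : (Fin p → Bool) × (Fin p → Bool)}

lemma disj_ol_K : Disjoint (olSet K hK) K :=
  Finset.disjoint_left.2 fun a ha haK => K_not_A haK (Finset.mem_union_left _ ha)

lemma hu_not_K {i : Fin p} (hi : i ∈ hatSet K hK ∪ undSet K hK) : i ∉ K := by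
  rcases Finset.mem_union.1 hi with h | h
  · exact (mem_hatSet.1 h).2.2
  · exact fun hiK => K_not_und hiK h

lemma hu_not_ol {i : Fin p} (hi : i ∈ hatSet K hK ∪ undSet K hK) : i ∉ olSet K hK := by
  intro hol
  rcases Finset.mem_union.1 hi with h | h
  · exact lt_asymm (mem_olSet.1 hol)
      (lt_of_le_of_lt (K.min'_le _ (K.min'_mem hK)) (mem_hatSet.1 h).1)
  · exact und_not_A h (Finset.mem_union_left _ hol)

lemma disj_big : Disjoint (olSet K hK ∪ K) (hatSet K hK ∪ undSet K hK) :=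
  Finset.disjoint_right.2 fun a ha => by
    rw [Finset.mem_union]
    push_neg
    exact ⟨hu_not_ol ha, hu_not_K ha⟩

lemma univ_split : (Finset.univ : Finset (Fin p))
    = (olSet K hK ∪ K) ∪ (hatSet K hK ∪ undSet K hK) := by
  ext i
  simp only [Finset.mem_univ, true_iff, Finset.mem_union]
  rcases classes (K := K) (hK := hK) i with h | h | h | h
  · exact Or.inl (Or.inl h)
  · exact Or.inl (Or.inr h)
  · exact Or.inr (Or.inl h)
  · exact Or.inr (Or.inr h)

include hXmeas hXmono in
lemma Eprod (hindep : iIndep (poSigma X Ypo) μ) (hqok : Qok K hK x q)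
    (hF : ∀ i : Fin p, i ∈ K ∪ hatSet K hK ∪ undSet K hK →
      x i = true → (μ {ω | X i (pre x i) ω = true}).toReal ≠ 0) :
    (μ (Eset X K (olSet K hK ∪ hatSet K hK) x q)).toReal
      = (μ (evX X x)).toReal *
        ((∏ i ∈ K, (1 - bR (q.2 i) + bR (x i) * (2 * bR (q.2 i) - 1) *
            ((μ {ω | X i (pre (xppv K (undSet K hK) q) i) ω = true}).toReal /
              (μ {ω | X i (pre x i) ω = true}).toReal))) *
         (∏ i ∈ hatSet K hK ∪ undSet K hK,
            ((1 - bR (q.2 i)) * (1 - bR (q.1 i)) +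
              bR (x i) * (2 * bR (q.2 i) - 1) * (1 - bR (q.1 i)) *
                ((μ {ω | X i (pre q.2 i) ω = true}).toReal /
                  (μ {ω | X i (pre x i) ω = true}).toReal) +
              bR (x i) * bR (q.2 i) * (2 * bR (q.1 i) - 1) *
                ((μ {ω | X i (pre q.1 i) ω = true}).toReal /
                  (μ {ω | X i (pre x i) ω = true}).toReal)))) := by
  classical
  have hstep : μ (Eset X K (olSet K hK ∪ hatSet K hK) x q) = ∏ i, μ (Dset X K hK x q i) := by
    rw [Eset_eq hqok]
    exact meas_iInter_prod μ hindep (fun i => Dset_poSigma i)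
  rw [hstep, ENNReal.toReal_prod, evX_measure μ hindep x, ENNReal.toReal_prod]
  rw [univ_split (K := K) (hK := hK), Finset.prod_union disj_big, Finset.prod_union disj_ol_K,
    Finset.prod_union disj_big, Finset.prod_union disj_ol_K]
  have h_ol : ∏ i ∈ olSet K hK, (μ (Dset X K hK x q i)).toReal
      = ∏ i ∈ olSet K hK, (μ {ω | X i (pre x i) ω = x i}).toReal :=
    Finset.prod_congr rfl fun i hi =>
      Dmeas_ol μ hXmeas hXmono (Finset.disjoint_left.1 disj_ol_K hi) hi
  have h_K : ∏ i ∈ K, (μ (Dset X K hK x q i)).toReal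
      = ∏ i ∈ K, ((μ {ω | X i (pre x i) ω = x i}).toReal *
          (1 - bR (q.2 i) + bR (x i) * (2 * bR (q.2 i) - 1) *
            ((μ {ω | X i (pre (xppv K (undSet K hK) q) i) ω = true}).toReal /
              (μ {ω | X i (pre x i) ω = true}).toReal))) :=
    Finset.prod_congr rfl fun i hi =>
      Dmeas_K μ hXmeas hXmono hqok hi
        (hF i (Finset.mem_union_left _ (Finset.mem_union_left _ hi)))
  have h_hu : ∏ i ∈ hatSet K hK ∪ undSet K hK, (μ (Dset X K hK x q i)).toReal
      = ∏ i ∈ hatSet K hK ∪ undSet K hK, ((μ {ω | X i (pre x i) ω = x i}).toReal *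
          ((1 - bR (q.2 i)) * (1 - bR (q.1 i)) +
            bR (x i) * (2 * bR (q.2 i) - 1) * (1 - bR (q.1 i)) *
              ((μ {ω | X i (pre q.2 i) ω = true}).toReal /
                (μ {ω | X i (pre x i) ω = true}).toReal) +
            bR (x i) * bR (q.2 i) * (2 * bR (q.1 i) - 1) *
              ((μ {ω | X i (pre q.1 i) ω = true}).toReal /
                (μ {ω | X i (pre x i) ω = true}).toReal))) :=
    Finset.prod_congr rfl fun i hi => by
      refine Dmeas_hu μ hXmeas hXmono hqok (hu_not_K hi) (hu_not_ol hi) ?_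
      refine hF i ?_
      rcases Finset.mem_union.1 hi with h | h
      · exact Finset.mem_union_left _ (Finset.mem_union_right _ h)
      · exact Finset.mem_union_right _ h
  rw [h_ol, h_K, h_hu, Finset.prod_mul_distrib, Finset.prod_mul_distrib]
  ring

end Part6b

lemma final_alg {Ex P2 P3 g2 g1 gx : ℝ} (hEx : Ex ≠ 0) (hgx : gx ≠ 0) :
    Ex * (P2 * P3) * (g2 - g1) / (Ex * gx) = (g2 - g1) / gx * P2 * P3 := by
  field_simp

end Stmt4

/-- Theorem 1, identification formula for the probability of root cause. -/
theorem stmt4 {Ω : Type*} [MeasurableSpace Ω] (μ : Measure Ω) [IsProbabilityMeasure μ]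
    {p : ℕ} (X : (i : Fin p) → (Fin i.1 → Bool) → Ω → Bool)
    (Ypo : (Fin p → Bool) → Ω → Bool)
    (hXmeas : ∀ (i : Fin p) (xbar : Fin i.1 → Bool), Measurable (X i xbar))
    (hYmeas : ∀ x : Fin p → Bool, Measurable (Ypo x))
    -- Monotonicity assumption
    (hXmono : ∀ (i : Fin p) (ω : Ω), Monotone (fun xbar : Fin i.1 → Bool => X i xbar ω))
    (hYmono : ∀ ω : Ω, Monotone (fun x : Fin p → Bool => Ypo x ω))
    -- No confounding and cross-world independence assumption
    (hindep : iIndep (poSigma X Ypo) μ)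
    (K : Finset (Fin p)) (hK : K.Nonempty) (x : Fin p → Bool)
    -- positivity assumptions
    (hpos1 : 0 < μ (evX X x ∩ {ω | obsY X Ypo ω = true}))
    (hpos2 : ∀ w : Fin p → Bool, 0 < μ (evX X w))
    (hpos3 : ∀ i ∈ K ∪ hatSet K hK ∪ undSet K hK, 0 < prX μ X i x) :
    PRC μ X Ypo K (olSet K hK ∪ hatSet K hK) (evX X x ∩ {ω | obsY X Ypo ω = true}) =
      ∑ q ∈ Finset.univ.filter
          (fun q : (Fin p → Bool) × (Fin p → Bool) =>
            q.1 ≤ q.2 ∧ q.2 ≤ x ∧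
            (∀ j ∈ olSet K hK, q.1 j = x j ∧ q.2 j = x j) ∧
            (∀ i ∈ K, q.1 i = false)),
        ((condProb μ {ω | obsY X Ypo ω = true} (evX X q.2) -
            condProb μ {ω | obsY X Ypo ω = true} (evX X q.1)) /
              condProb μ {ω | obsY X Ypo ω = true} (evX X x))
        * (∏ i ∈ K,
            ((1 - bR (q.2 i)) +
              bR (x i) * (2 * bR (q.2 i) - 1) *
                (prX μ X i (fun j => if j ∈ K ∪ undSet K hK then q.2 j else false) /
                  prX μ X i x)))
        * (∏ i ∈ hatSet K hK ∪ undSet K hK,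
            ((1 - bR (q.2 i)) * (1 - bR (q.1 i)) +
              bR (x i) * (2 * bR (q.2 i) - 1) * (1 - bR (q.1 i)) *
                (prX μ X i q.2 / prX μ X i x) +
              bR (x i) * bR (q.2 i) * (2 * bR (q.1 i) - 1) *
                (prX μ X i q.1 / prX μ X i x))) := by
  classical
  have hprX : ∀ (i : Fin p) (w : Fin p → Bool),
      prX μ X i w = (μ {ω | X i (Stmt4.pre w i) ω = true}).toReal :=
    Stmt4.prX_eq μ hXmeas hYmeas hindep hpos2
  have hcond : ∀ w : Fin p → Bool, condProb μ {ω | obsY X Ypo ω = true} (evX X w)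
      = (μ {ω | Ypo w ω = true}).toReal :=
    Stmt4.condY_eq μ hXmeas hYmeas hindep hpos2
  have hindXY := Stmt4.indepXY μ hXmeas hYmeas hindep
  -- positivity of prefix-probabilities at `x`
  have hF : ∀ i : Fin p, i ∈ K ∪ hatSet K hK ∪ undSet K hK →
      x i = true → (μ {ω | X i (Stmt4.pre x i) ω = true}).toReal ≠ 0 := by
    intro i hi _
    have h0 := hpos3 i hi
    rw [hprX] at h0
    exact h0.ne'
  -- the denominator event
  have hBset : evX X x ∩ {ω | obsY X Ypo ω = true} = evX X x ∩ {ω | Ypo x ω = true} := by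
    ext ω
    simp only [Set.mem_inter_iff, Set.mem_setOf_eq]
    refine and_congr_right fun hω => ?_
    rw [show obsY X Ypo ω = Ypo (fun i => obsX X i ω) ω from rfl, funext hω]
  have hBden : (μ (evX X x ∩ {ω | obsY X Ypo ω = true})).toReal
      = (μ (evX X x)).toReal * (μ {ω | Ypo x ω = true}).toReal := by
    rw [hBset, (Indep_iff _ _ _).1 hindXY _ _ (Stmt4.evX_mem_mX x) (Stmt4.measSet_Y x true),
      ENNReal.toReal_mul]
  have hpos1' : 0 < (μ (evX X x ∩ {ω | obsY X Ypo ω = true})).toReal :=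
    ENNReal.toReal_pos hpos1.ne' (measure_ne_top μ _)
  have hpos1'' := hpos1'
  rw [hBden] at hpos1''
  have hEx0 : (μ (evX X x)).toReal ≠ 0 := by
    intro h
    rw [h, zero_mul] at hpos1''
    exact lt_irrefl 0 hpos1''
  have hgx0 : (μ {ω | Ypo x ω = true}).toReal ≠ 0 := by
    intro h
    rw [h, mul_zero] at hpos1''
    exact lt_irrefl 0 hpos1''
  -- the main set identity and the sum decomposition
  have hQQ : (Finset.univ.filter
        (fun q : (Fin p → Bool) × (Fin p → Bool) => Stmt4.Qok K hK x q))
      = Finset.univ.filter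
        (fun q : (Fin p → Bool) × (Fin p → Bool) =>
          q.1 ≤ q.2 ∧ q.2 ≤ x ∧
          (∀ j ∈ olSet K hK, q.1 j = x j ∧ q.2 j = x j) ∧
          (∀ i ∈ K, q.1 i = false)) := by
    apply Finset.filter_congr
    intro q _
    simp [Stmt4.Qok]
  have hmain := Stmt4.mainSetEq (X := X) (Ypo := Ypo) hXmono hYmono (K := K) (hK := hK) (x := x)
  rw [hQQ] at hmain
  have hdisj : Set.PairwiseDisjoint
      (↑(Finset.univ.filter
        (fun q : (Fin p → Bool) × (Fin p → Bool) =>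
          q.1 ≤ q.2 ∧ q.2 ≤ x ∧
          (∀ j ∈ olSet K hK, q.1 j = x j ∧ q.2 j = x j) ∧
          (∀ i ∈ K, q.1 i = false))) : Set ((Fin p → Bool) × (Fin p → Bool)))
      (fun q => Stmt4.Eset X K (olSet K hK ∪ hatSet K hK) x q ∩
          ({ω | Ypo q.2 ω = true} ∩ {ω | Ypo q.1 ω = false})) := by
    intro q _ q' _ hne
    exact Set.disjoint_left.2 fun ω h h' => hne (Stmt4.Eset_injective h.1 h'.1)
  have hmeasf : ∀ q ∈ Finset.univ.filter
        (fun q : (Fin p → Bool) × (Fin p → Bool) =>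
          q.1 ≤ q.2 ∧ q.2 ≤ x ∧
          (∀ j ∈ olSet K hK, q.1 j = x j ∧ q.2 j = x j) ∧
          (∀ i ∈ K, q.1 i = false)),
      MeasurableSet (Stmt4.Eset X K (olSet K hK ∪ hatSet K hK) x q ∩
          ({ω | Ypo q.2 ω = true} ∩ {ω | Ypo q.1 ω = false})) := by
    intro q hq
    have hqok : Stmt4.Qok K hK x q := (Finset.mem_filter.1 hq).2
    refine MeasurableSet.inter ?_ (MeasurableSet.inter
      (hYmeas q.2 (measurableSet_singleton true)) (hYmeas q.1 (measurableSet_singleton false)))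
    rw [Stmt4.Eset_eq hqok]
    exact MeasurableSet.iInter fun i =>
      Stmt4.measLe (Stmt4.poSigma_le hXmeas hYmeas _) (Stmt4.Dset_poSigma i)
  rw [PRC, condProb, hmain, measure_biUnion_finset hdisj hmeasf,
    ENNReal.toReal_sum (fun q _ => measure_ne_top μ _), Finset.sum_div]
  simp only [hprX, hcond]
  refine Finset.sum_congr rfl fun q hq => ?_
  have hqok : Stmt4.Qok K hK x q := (Finset.mem_filter.1 hq).2
  -- factorize the term
  have hmE : MeasurableSet[Stmt4.mX X Ypo] (Stmt4.Eset X K (olSet K hK ∪ hatSet K hK) x q) := by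
    rw [Stmt4.Eset_eq hqok]
    exact MeasurableSet.iInter fun i =>
      Stmt4.measLe (Stmt4.poSigma_le_mX i) (Stmt4.Dset_poSigma i)
  have hmY : MeasurableSet[poSigma X Ypo (Fin.last p)]
      ({ω | Ypo q.2 ω = true} ∩ {ω | Ypo q.1 ω = false}) :=
    MeasurableSet.inter (Stmt4.measSet_Y q.2 true) (Stmt4.measSet_Y q.1 false)
  have hfact := (Indep_iff _ _ _).1 hindXY _ _ hmE hmY
  have hYsub : {ω | Ypo q.1 ω = true} ⊆ {ω | Ypo q.2 ω = true} := fun ω h =>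
    Stmt4.bool_le_eq_true (show Ypo q.1 ω ≤ Ypo q.2 ω from hYmono ω hqok.1) h
  have hYm : (μ ({ω | Ypo q.2 ω = true} ∩ {ω | Ypo q.1 ω = false})).toReal
      = (μ {ω | Ypo q.2 ω = true}).toReal - (μ {ω | Ypo q.1 ω = true}).toReal := by
    rw [show {ω | Ypo q.1 ω = false} = {ω | Ypo q.1 ω = true}ᶜ from by ext ω; simp,
      ← Set.diff_eq,
      measure_diff hYsub (hYmeas q.1 (measurableSet_singleton true)).nullMeasurableSet
        (measure_ne_top μ _),
      ENNReal.toReal_sub_of_le (measure_mono hYsub) (measure_ne_top μ _)]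
  have hEprod := Stmt4.Eprod μ hXmeas hXmono hindep hqok hF
  rw [show (fun j => if j ∈ K ∪ undSet K hK then q.2 j else false)
      = Stmt4.xppv K (undSet K hK) q from rfl]
  rw [hfact, ENNReal.toReal_mul, hYm, hEprod, hBden]
  exact Stmt4.final_alg hEx0 hgx0
end

section
/- Assume the potential-outcome model with the Monotonicity and No-confounding-and-cross-world-independence assumptions. Fix k ∈ {1,…,p} and x ∈ {0,1}^p with P(X = x, Y = 1) > 0 and P(X̄_k = 0) > 0, where X̄_k = (X₁,…,X_{k−1}) and 0 ∈ {0,1}^{k−1} is the all-zeros vector. If x_k = 0 then PRC(X_k ⇒ Y | X = x, Y = 1) = 0. If x_k = 1 (so that Pr(X_k = 1 | X̄_k = x̄_k) > 0), then PRC(X_k ⇒ Y | X = x, Y = 1) = [Pr(X_k = 1 | X̄_k = 0) / Pr(X_k = 1 | X̄_k = x̄_k)] · PostTCE(X_k ⇒ Y | X = x, Y = 1), where PostTCE(X_k ⇒ Y | B) = E[Y_{{k},1} − Y_{{k},0} | B]. (Property 3(a).) -/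
open MeasureTheory ProbabilityTheory
open scoped Classical

/-- `PostTCE(X_K ⇒ Y | B) = E[Y_{K,1} − Y_{K,0} | B]`. -/
noncomputable def PostTCE {Ω : Type*} [MeasurableSpace Ω] (μ : Measure Ω) {p : ℕ}
    (X : (i : Fin p) → (Fin i.1 → Bool) → Ω → Bool)
    (Ypo : (Fin p → Bool) → Ω → Bool) (K : Finset (Fin p)) (B : Set Ω) : ℝ :=
  condExpEvent μ
    (fun ω => bR (intY X Ypo K (fun _ => true) ω) - bR (intY X Ypo K (fun _ => false) ω)) B


namespace Stmt5Aux

lemma finStrong {p : ℕ} {C : Fin p → Prop}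
    (h : ∀ i : Fin p, (∀ j : Fin p, j.1 < i.1 → C j) → C i) : ∀ i, C i := by
  have H : ∀ n, ∀ i : Fin p, i.1 < n → C i := by
    intro n
    induction n with
    | zero => intro i hi; omega
    | succ n IH => exact fun i hi => h i (fun j hj => IH j (by omega))
  exact fun i => H (i.1 + 1) i (by omega)

variable {Ω : Type*} {p : ℕ} (X : (i : Fin p) → (Fin i.1 → Bool) → Ω → Bool)
  (Ypo : (Fin p → Bool) → Ω → Bool)

lemma intX_congr (S S' : Finset (Fin p)) (u u' : Fin p → Bool) (ω : Ω) :
    ∀ i : Fin p, (∀ j : Fin p, j.1 ≤ i.1 → ((j ∈ S ↔ j ∈ S') ∧ (j ∈ S → u j = u' j))) →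
      intX X S u i ω = intX X S' u' i ω := by
  refine finStrong (fun i IH hyp => ?_)
  rw [intX, intX]
  by_cases hi : i ∈ S
  · rw [if_pos hi, if_pos ((hyp i le_rfl).1.mp hi), (hyp i le_rfl).2 hi]
  · rw [if_neg hi, if_neg (fun h => hi ((hyp i le_rfl).1.mpr h))]
    congr 1
    funext j
    exact IH ⟨j.1, lt_trans j.isLt i.isLt⟩ j.isLt
      (fun j' hj' => hyp j' (le_trans hj' (le_of_lt j.isLt)))

lemma intX_absorb (S T : Finset (Fin p)) (u : Fin p → Bool) (ω : Ω) :
    ∀ i : Fin p, (∀ j ∈ T, j.1 ≤ i.1 → u j = intX X S u j ω) →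
      intX X (S ∪ T) u i ω = intX X S u i ω := by
  refine finStrong (fun i IH hyp => ?_)
  by_cases hiS : i ∈ S
  · rw [intX, if_pos (Finset.mem_union_left _ hiS)]
    rw [intX, if_pos hiS]
  · by_cases hiT : i ∈ T
    · rw [intX, if_pos (Finset.mem_union_right _ hiT)]
      exact hyp i hiT le_rfl
    · rw [intX, if_neg (by simp [hiS, hiT]), intX, if_neg hiS]
      congr 1
      funext j
      exact IH ⟨j.1, lt_trans j.isLt i.isLt⟩ j.isLt
        (fun j' hj' hle => hyp j' hj' (le_trans hle (le_of_lt j.isLt)))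

lemma intX_mono (hXmono : ∀ (i : Fin p) (ω : Ω), Monotone (fun xbar : Fin i.1 → Bool => X i xbar ω))
    (S : Finset (Fin p)) (ω : Ω) {u u' : Fin p → Bool} (h : ∀ j, u j ≤ u' j) :
    ∀ i : Fin p, intX X S u i ω ≤ intX X S u' i ω := by
  refine finStrong (fun i IH => ?_)
  rw [intX, intX]
  by_cases hi : i ∈ S
  · rw [if_pos hi, if_pos hi]; exact h i
  · rw [if_neg hi, if_neg hi]
    exact hXmono i ω (fun j => IH ⟨j.1, lt_trans j.isLt i.isLt⟩ j.isLt)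

lemma intY_mono (hXmono : ∀ (i : Fin p) (ω : Ω), Monotone (fun xbar : Fin i.1 → Bool => X i xbar ω))
    (hYmono : ∀ ω : Ω, Monotone (fun x : Fin p → Bool => Ypo x ω))
    (S : Finset (Fin p)) (ω : Ω) {u u' : Fin p → Bool} (h : ∀ j, u j ≤ u' j) :
    intY X Ypo S u ω ≤ intY X Ypo S u' ω :=
  hYmono ω (fun i => intX_mono X hXmono S ω h i)

lemma intX_empty_eq_obs (u : Fin p → Bool) (ω : Ω) (i : Fin p) :
    intX X ∅ u i ω = obsX X i ω :=
  intX_congr X ∅ ∅ u (fun _ => false) ω i (fun j _ => by simp)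

lemma obsX_unfold (i : Fin p) (ω : Ω) :
    obsX X i ω = X i (fun j => obsX X ⟨j.1, lt_trans j.isLt i.isLt⟩ ω) ω := by
  conv_lhs => rw [obsX, intX]
  rw [if_neg (Finset.notMem_empty i)]
  rfl

lemma intX_notmem_lt (S : Finset (Fin p)) (u : Fin p → Bool) (ω : Ω) (i : Fin p)
    (h : ∀ j : Fin p, j.1 ≤ i.1 → j ∉ S) : intX X S u i ω = obsX X i ω := by
  rw [← intX_empty_eq_obs X u ω i]
  exact intX_congr X S ∅ u u ω i (fun j hj => by simp [h j hj])

lemma intX_absorb_to_obs (S : Finset (Fin p)) (u : Fin p → Bool) (ω : Ω)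
    (h : ∀ j ∈ S, u j = obsX X j ω) (i : Fin p) : intX X S u i ω = obsX X i ω := by
  have h1 : intX X (∅ ∪ S) u i ω = intX X ∅ u i ω :=
    intX_absorb X ∅ S u ω i
      (fun j hj _ => by rw [intX_empty_eq_obs X u ω j]; exact h j hj)
  rw [Finset.empty_union] at h1
  rw [h1]
  exact intX_empty_eq_obs X u ω i

lemma intY_congr_k (k : Fin p) (u u' : Fin p → Bool) (ω : Ω) (h : u k = u' k) :
    intY X Ypo {k} u ω = intY X Ypo {k} u' ω := by
  unfold intY
  congr 1
  funext i
  exact intX_congr X {k} {k} u u' ω i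
    (fun j _ => ⟨Iff.rfl, fun hj => by rwa [Finset.mem_singleton.mp hj]⟩)

lemma intY_k_obs (k : Fin p) (u : Fin p → Bool) (ω : Ω) (h : u k = obsX X k ω) :
    intY X Ypo {k} u ω = obsY X Ypo ω := by
  unfold intY obsY intY
  congr 1
  funext i
  rw [intX_absorb_to_obs X {k} u ω (fun j hj => by rwa [Finset.mem_singleton.mp hj]) i]
  exact (intX_empty_eq_obs X _ ω i).symm

lemma obs_prefix_iff (x : Fin p → Bool) (ω : Ω) (K : ℕ) :
    (∀ j : Fin p, j.1 < K → obsX X j ω = x j) ↔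
    (∀ j : Fin p, j.1 < K → X j (fun i => x ⟨i.1, lt_trans i.isLt j.isLt⟩) ω = x j) := by
  constructor
  · intro h j hj
    have : (fun i : Fin j.1 => x ⟨i.1, lt_trans i.isLt j.isLt⟩) =
        (fun i : Fin j.1 => obsX X ⟨i.1, lt_trans i.isLt j.isLt⟩ ω) :=
      funext fun i => (h ⟨i.1, lt_trans i.isLt j.isLt⟩ (lt_trans i.isLt hj)).symm
    rw [this, ← obsX_unfold X j ω]
    exact h j hj
  · intro h
    have main : ∀ j : Fin p, j.1 < K → obsX X j ω = x j := by
      refine finStrong (fun j IH hj => ?_)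
      rw [obsX_unfold]
      have : (fun i : Fin j.1 => obsX X ⟨i.1, lt_trans i.isLt j.isLt⟩ ω) =
          (fun i : Fin j.1 => x ⟨i.1, lt_trans i.isLt j.isLt⟩) :=
        funext fun i => IH ⟨i.1, lt_trans i.isLt j.isLt⟩ i.isLt (lt_trans i.isLt hj)
      rw [this]
      exact h j hj
    exact main

lemma obsY_eq (x : Fin p → Bool) (ω : Ω) (h : ∀ j, obsX X j ω = x j) :
    obsY X Ypo ω = Ypo x ω := by
  unfold obsY intY
  congr 1
  funext i
  rw [intX_empty_eq_obs X _ ω i]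
  exact h i

/-- interventions on everything up to and including `k` -/
def Sle {p : ℕ} (k : Fin p) : Finset (Fin p) := Finset.univ.filter (fun j => j.1 ≤ k.1)

lemma intX_singleton_eq_Sle (k : Fin p) (x u : Fin p → Bool) (ω : Ω)
    (hu : ∀ j : Fin p, j.1 < k.1 → u j = x j)
    (hpre : ∀ j : Fin p, j.1 < k.1 → obsX X j ω = x j) (i : Fin p) :
    intX X {k} u i ω = intX X (Sle k) u i ω := by
  have hset : Sle k = {k} ∪ Finset.univ.filter (fun j : Fin p => j.1 < k.1) := by
    ext j
    simp only [Sle, Finset.mem_filter, Finset.mem_univ, true_and, Finset.mem_union,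
      Finset.mem_singleton, Fin.ext_iff]
    omega
  rw [hset]
  refine (intX_absorb X {k} _ u ω i (fun j hj _ => ?_)).symm
  have hjk : j.1 < k.1 := (Finset.mem_filter.mp hj).2
  rw [intX_notmem_lt X {k} u ω j
    (fun j' hj' => by simp only [Finset.mem_singleton, Fin.ext_iff]; omega)]
  rw [hpre j hjk, hu j hjk]

lemma meas_intX (M : MeasurableSpace Ω) (S : Finset (Fin p)) (u : Fin p → Bool)
    (hX : ∀ j : Fin p, j ∉ S → ∀ v, Measurable[M] (X j v)) :
    ∀ i : Fin p, Measurable[M] (fun ω => intX X S u i ω) := by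
  refine finStrong (fun i IH => ?_)
  by_cases hi : i ∈ S
  · have : (fun ω => intX X S u i ω) = fun _ => u i := by
      funext ω; rw [intX, if_pos hi]
    rw [this]; exact measurable_const
  · have heq : (fun ω => intX X S u i ω) =
        fun ω => X i (fun j => intX X S u ⟨j.1, lt_trans j.isLt i.isLt⟩ ω) ω := by
      funext ω; rw [intX, if_neg hi]
    rw [heq]
    refine measurable_to_countable' (fun c => ?_)
    have hset : (fun ω => X i (fun j => intX X S u ⟨j.1, lt_trans j.isLt i.isLt⟩ ω) ω) ⁻¹' {c}
        = ⋃ v : Fin i.1 → Bool,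
          ({ω | ∀ j : Fin i.1, intX X S u ⟨j.1, lt_trans j.isLt i.isLt⟩ ω = v j}
            ∩ (X i v ⁻¹' {c})) := by
      ext ω
      simp only [Set.mem_preimage, Set.mem_singleton_iff, Set.mem_iUnion, Set.mem_inter_iff,
        Set.mem_setOf_eq]
      constructor
      · intro h
        exact ⟨fun j => intX X S u ⟨j.1, lt_trans j.isLt i.isLt⟩ ω, fun _ => rfl, h⟩
      · rintro ⟨v, hv, hc⟩
        have : (fun j : Fin i.1 => intX X S u ⟨j.1, lt_trans j.isLt i.isLt⟩ ω) = v :=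
          funext hv
        rw [this]; exact hc
    rw [hset]
    refine MeasurableSet.iUnion (fun v => MeasurableSet.inter ?_ ?_)
    · have : {ω | ∀ j : Fin i.1, intX X S u ⟨j.1, lt_trans j.isLt i.isLt⟩ ω = v j}
          = ⋂ j : Fin i.1,
            ((fun ω => intX X S u ⟨j.1, lt_trans j.isLt i.isLt⟩ ω) ⁻¹' {v j}) := by
        ext ω; simp [Set.mem_iInter]
      rw [this]
      exact MeasurableSet.iInter
        (fun j => (IH ⟨j.1, lt_trans j.isLt i.isLt⟩ j.isLt) (measurableSet_singleton _))
    · exact (hX i hi v) (measurableSet_singleton _)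

lemma meas_intY (M : MeasurableSpace Ω) (S : Finset (Fin p)) (u : Fin p → Bool)
    (hX : ∀ j : Fin p, j ∉ S → ∀ v, Measurable[M] (X j v))
    (hY : ∀ v, Measurable[M] (Ypo v)) :
    Measurable[M] (fun ω => intY X Ypo S u ω) := by
  refine measurable_to_countable' (fun c => ?_)
  have hset : (fun ω => intY X Ypo S u ω) ⁻¹' {c}
      = ⋃ v : Fin p → Bool,
        ({ω | ∀ i : Fin p, intX X S u i ω = v i} ∩ (Ypo v ⁻¹' {c})) := by
    ext ω
    simp only [Set.mem_preimage, Set.mem_singleton_iff, Set.mem_iUnion, Set.mem_inter_iff,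
      Set.mem_setOf_eq, intY]
    constructor
    · intro h
      exact ⟨fun i => intX X S u i ω, fun _ => rfl, h⟩
    · rintro ⟨v, hv, hc⟩
      have : (fun i : Fin p => intX X S u i ω) = v := funext hv
      rw [this]; exact hc
  rw [hset]
  refine MeasurableSet.iUnion (fun v => MeasurableSet.inter ?_ ?_)
  · have : {ω | ∀ i : Fin p, intX X S u i ω = v i}
        = ⋂ i : Fin p, ((fun ω => intX X S u i ω) ⁻¹' {v i}) := by
      ext ω; simp [Set.mem_iInter]
    rw [this]
    exact MeasurableSet.iInter
      (fun i => (meas_intX X M S u hX i) (measurableSet_singleton _))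
  · exact (hY v) (measurableSet_singleton _)

/-- the index of family `j` inside `Fin (p+1)` -/
def kidx {p : ℕ} (j : Fin p) : Fin (p + 1) := ⟨j.1, Nat.lt_succ_of_lt j.isLt⟩

lemma poSigma_castSucc (j : Fin p) :
    poSigma X Ypo (kidx j) =
      ⨆ xbar : Fin j.1 → Bool, MeasurableSpace.comap (X j xbar) inferInstance := by
  have hj : (kidx j).1 < p := j.isLt
  simp only [poSigma, dif_pos hj]
  rfl

lemma poSigma_last :
    poSigma X Ypo (Fin.last p) =
      ⨆ v : Fin p → Bool, MeasurableSpace.comap (Ypo v) inferInstance := by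
  simp only [poSigma, Fin.val_last, dif_neg (lt_irrefl p)]

lemma measSet_X (j : Fin p) (v : Fin j.1 → Bool) (c : Bool) :
    MeasurableSet[poSigma X Ypo (kidx j)] {ω | X j v ω = c} := by
  rw [poSigma_castSucc]
  exact (le_iSup (fun xbar => MeasurableSpace.comap (X j xbar) inferInstance) v) _
    ⟨{c}, measurableSet_singleton c, rfl⟩

lemma measSet_Y (v : Fin p → Bool) (c : Bool) :
    MeasurableSet[poSigma X Ypo (Fin.last p)] {ω | Ypo v ω = c} := by
  rw [poSigma_last]
  exact (le_iSup (fun v => MeasurableSpace.comap (Ypo v) inferInstance) v) _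
    ⟨{c}, measurableSet_singleton c, rfl⟩

lemma poSigma_le [M0 : MeasurableSpace Ω]
    (hXmeas : ∀ (i : Fin p) (xbar : Fin i.1 → Bool), Measurable (X i xbar))
    (hYmeas : ∀ x : Fin p → Bool, Measurable (Ypo x)) :
    ∀ i, poSigma X Ypo i ≤ M0 := by
  intro i
  unfold poSigma
  split_ifs with h
  · exact iSup_le (fun v => (hXmeas ⟨_, h⟩ v).comap_le)
  · exact iSup_le (fun v => (hYmeas v).comap_le)

lemma true_le_iff {b : Bool} (h : true ≤ b) : b = true := by
  cases b
  · exact absurd h (by decide)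
  · rfl

lemma obsX_at (k : Fin p) (w : Fin p → Bool) (ω : Ω)
    (h : ∀ j : Fin p, j.1 < k.1 → obsX X j ω = w j) :
    obsX X k ω = X k (fun i => w ⟨i.1, lt_trans i.isLt k.isLt⟩) ω := by
  rw [obsX_unfold X k ω]
  congr 1
  funext i
  exact h ⟨i.1, lt_trans i.isLt k.isLt⟩ i.isLt

end Stmt5Aux

/-- Property 3(a): for a singleton candidate `K = {k}`,
`PRC(X_k ⇒ Y | X = x, Y = 1)` vanishes if `x_k = 0`, and equals
`[Pr(X_k = 1 | X̄_k = 0) / Pr(X_k = 1 | X̄_k = x̄_k)] · PostTCE(X_k ⇒ Y | X = x, Y = 1)`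
if `x_k = 1`. -/
theorem stmt5 {Ω : Type*} [MeasurableSpace Ω] (μ : Measure Ω) [IsProbabilityMeasure μ]
    {p : ℕ} (X : (i : Fin p) → (Fin i.1 → Bool) → Ω → Bool)
    (Ypo : (Fin p → Bool) → Ω → Bool)
    (hXmeas : ∀ (i : Fin p) (xbar : Fin i.1 → Bool), Measurable (X i xbar))
    (hYmeas : ∀ x : Fin p → Bool, Measurable (Ypo x))
    -- Monotonicity assumption
    (hXmono : ∀ (i : Fin p) (ω : Ω), Monotone (fun xbar : Fin i.1 → Bool => X i xbar ω))
    (hYmono : ∀ ω : Ω, Monotone (fun x : Fin p → Bool => Ypo x ω))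
    -- No confounding and cross-world independence assumption
    (hindep : iIndep (poSigma X Ypo) μ)
    (k : Fin p) (x : Fin p → Bool)
    (hpos1 : 0 < μ (evX X x ∩ {ω | obsY X Ypo ω = true}))
    (hpos2 : 0 < μ (evPrefix X k (fun _ => false))) :
    (x k = false →
      PRC μ X Ypo {k} (Finset.univ.filter (fun j => j < k))
        (evX X x ∩ {ω | obsY X Ypo ω = true}) = 0) ∧
    (x k = true →
      PRC μ X Ypo {k} (Finset.univ.filter (fun j => j < k))
        (evX X x ∩ {ω | obsY X Ypo ω = true}) =
        (prX μ X k (fun _ => false) / prX μ X k x) *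
          PostTCE μ X Ypo {k} (evX X x ∩ {ω | obsY X Ypo ω = true})) := by
  classical
  set B : Set Ω := evX X x ∩ {ω | obsY X Ypo ω = true} with hBdef
  -- characterization of the cause event for a singleton
  have hC : ∀ ω, ω ∈ causeEvent X Ypo {k} ↔
      ¬ (intY X Ypo {k} (fun _ => false) ω = intY X Ypo {k} (fun _ => true) ω) := by
    intro ω
    constructor
    · rintro ⟨u, u', hne, hY⟩
      by_cases huk : u k = u' k
      · exact absurd (Stmt5Aux.intY_congr_k X Ypo k u u' ω huk) hY
      intro hcon
      cases hu : u k with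
      | false =>
        have hu' : u' k = true := by
          cases hu'' : u' k
          · exact absurd (hu.trans hu''.symm) huk
          · rfl
        exact hY (((Stmt5Aux.intY_congr_k X Ypo k u (fun _ => false) ω (by rw [hu])).trans
          hcon).trans (Stmt5Aux.intY_congr_k X Ypo k (fun _ => true) u' ω (by rw [hu'])))
      | true =>
        have hu' : u' k = false := by
          cases hu'' : u' k
          · rfl
          · exact absurd (hu.trans hu''.symm) huk
        exact hY (((Stmt5Aux.intY_congr_k X Ypo k u (fun _ => true) ω (by rw [hu])).trans
          hcon.symm).trans (Stmt5Aux.intY_congr_k X Ypo k (fun _ => false) u' ω (by rw [hu'])))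
    · intro h
      exact ⟨(fun _ => false), (fun _ => true),
        fun hh => Bool.false_ne_true (congrFun hh k), h⟩
  constructor
  · -- case x k = false
    intro hxk
    have hempty : (causeEvent X Ypo {k} ∩
        rootEvent X Ypo {k} (Finset.univ.filter (fun j => j < k))) ∩ B = ∅ := by
      ext ω
      simp only [Set.mem_inter_iff, Set.mem_empty_iff_false, iff_false, not_and]
      rintro ⟨hc, _⟩ hB
      have hobs : ∀ i, obsX X i ω = x i := hB.1
      have hy : obsY X Ypo ω = true := hB.2
      have h0 : intY X Ypo {k} (fun _ => false) ω = true := by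
        rw [Stmt5Aux.intY_k_obs X Ypo k _ ω (by rw [hobs k, hxk])]
        exact hy
      have h1 : intY X Ypo {k} (fun _ => true) ω = true := by
        have hle := Stmt5Aux.intY_mono X Ypo hXmono hYmono {k} ω
          (u := fun _ => false) (u' := fun _ => true) (fun j => Bool.false_le _)
        rw [h0] at hle
        cases hEq : intY X Ypo {k} (fun _ => true) ω
        · rw [hEq] at hle; exact absurd hle (by decide)
        · rfl
      exact ((hC ω).mp hc) (h0.trans h1.symm)
    unfold PRC condProb
    rw [hempty, measure_empty]
    simp
  · -- case x k = true
    intro hxk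
    -- index sets and σ-algebras
    set S1 : Set (Fin (p+1)) := {i | i.1 < k.1} with hS1def
    set S23 : Set (Fin (p+1)) := {i | k.1 ≤ i.1} with hS23def
    set S3 : Set (Fin (p+1)) := {i | k.1 < i.1} with hS3def
    have h_le := Stmt5Aux.poSigma_le X Ypo hXmeas hYmeas
    -- events
    set E1 : Set Ω := {ω | ∀ j : Fin p, j.1 < k.1 →
      X j (fun i => x ⟨i.1, lt_trans i.isLt j.isLt⟩) ω = x j} with hE1def
    set E1z : Set Ω := {ω | ∀ j : Fin p, j.1 < k.1 →
      X j (fun _ => false) ω = false} with hE1zdef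
    set Ekx : Set Ω := {ω | X k (fun i => x ⟨i.1, lt_trans i.isLt k.isLt⟩) ω = true} with hEkxdef
    set Ek0 : Set Ω := {ω | X k (fun _ => false) ω = true} with hEk0def
    set G' : Set Ω := {ω | (∀ j : Fin p, k.1 < j.1 →
      X j (fun i => x ⟨i.1, lt_trans i.isLt j.isLt⟩) ω = x j) ∧ Ypo x ω = true} with hG'def
    set x0 : Fin p → Bool := fun j => if j = k then false else x j with hx0def
    set T0 : Set Ω := {ω | intY X Ypo (Stmt5Aux.Sle k) x0 ω = false} with hT0def
    set G : Set Ω := G' ∩ T0 with hGdef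
    -- measurability of the events w.r.t. the grouped σ-algebras
    have hE1m : MeasurableSet[(⨆ i ∈ S1, poSigma X Ypo i)] E1 := by
      have he : E1 = ⋂ j : Fin p, ⋂ (_ : j.1 < k.1),
          {ω | X j (fun i => x ⟨i.1, lt_trans i.isLt j.isLt⟩) ω = x j} := by
        ext ω; simp only [hE1def, Set.mem_setOf_eq, Set.mem_iInter]
      rw [he]
      refine MeasurableSet.iInter (fun j => MeasurableSet.iInter (fun hj => ?_))
      exact (le_biSup (poSigma X Ypo) (show Stmt5Aux.kidx j ∈ S1 from hj)) _
        (Stmt5Aux.measSet_X X Ypo j _ (x j))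
    have hE1zm : MeasurableSet[(⨆ i ∈ S1, poSigma X Ypo i)] E1z := by
      have he : E1z = ⋂ j : Fin p, ⋂ (_ : j.1 < k.1),
          {ω | X j (fun _ => false) ω = false} := by
        ext ω; simp only [hE1zdef, Set.mem_setOf_eq, Set.mem_iInter]
      rw [he]
      refine MeasurableSet.iInter (fun j => MeasurableSet.iInter (fun hj => ?_))
      exact (le_biSup (poSigma X Ypo) (show Stmt5Aux.kidx j ∈ S1 from hj)) _
        (Stmt5Aux.measSet_X X Ypo j _ false)
    have hEkxm : MeasurableSet[poSigma X Ypo (Stmt5Aux.kidx k)] Ekx :=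
      Stmt5Aux.measSet_X X Ypo k _ true
    have hEk0m : MeasurableSet[poSigma X Ypo (Stmt5Aux.kidx k)] Ek0 :=
      Stmt5Aux.measSet_X X Ypo k _ true
    have hlastS3 : Fin.last p ∈ S3 := k.isLt
    have hG'm : MeasurableSet[(⨆ i ∈ S3, poSigma X Ypo i)] G' := by
      have he : G' = (⋂ j : Fin p, ⋂ (_ : k.1 < j.1),
          {ω | X j (fun i => x ⟨i.1, lt_trans i.isLt j.isLt⟩) ω = x j}) ∩
          {ω | Ypo x ω = true} := by
        ext ω; simp only [hG'def, Set.mem_setOf_eq, Set.mem_inter_iff, Set.mem_iInter]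
      rw [he]
      refine MeasurableSet.inter ?_ ?_
      · refine MeasurableSet.iInter (fun j => MeasurableSet.iInter (fun hj => ?_))
        exact (le_biSup (poSigma X Ypo) (show Stmt5Aux.kidx j ∈ S3 from hj)) _
          (Stmt5Aux.measSet_X X Ypo j _ (x j))
      · exact (le_biSup (poSigma X Ypo) hlastS3) _ (Stmt5Aux.measSet_Y X Ypo x true)
    have hXm3 : ∀ j : Fin p, j ∉ Stmt5Aux.Sle k → ∀ v, Measurable[(⨆ i ∈ S3, poSigma X Ypo i)] (X j v) := by
      intro j hj v
      have hjk : k.1 < j.1 := by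
        simp only [Stmt5Aux.Sle, Finset.mem_filter, Finset.mem_univ, true_and] at hj; omega
      refine Measurable.of_comap_le (le_trans ?_
        (le_biSup (poSigma X Ypo) (show Stmt5Aux.kidx j ∈ S3 from hjk)))
      rw [Stmt5Aux.poSigma_castSucc]
      exact le_iSup (fun xbar => MeasurableSpace.comap (X j xbar) inferInstance) v
    have hYm3 : ∀ v, Measurable[(⨆ i ∈ S3, poSigma X Ypo i)] (Ypo v) := by
      intro v
      refine Measurable.of_comap_le (le_trans ?_ (le_biSup (poSigma X Ypo) hlastS3))
      rw [Stmt5Aux.poSigma_last]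
      exact le_iSup (fun v => MeasurableSpace.comap (Ypo v) inferInstance) v
    have hT0m : MeasurableSet[(⨆ i ∈ S3, poSigma X Ypo i)] T0 :=
      Stmt5Aux.meas_intY X Ypo (⨆ i ∈ S3, poSigma X Ypo i) _ x0 hXm3 hYm3 (measurableSet_singleton false)
    have hGm : MeasurableSet[(⨆ i ∈ S3, poSigma X Ypo i)] G := hG'm.inter hT0m
    -- independence
    have hdis12 : Disjoint S1 S23 := by
      rw [Set.disjoint_left]
      intro i hi hi'
      simp only [hS1def, hS23def, Set.mem_setOf_eq] at hi hi'
      omega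
    have hdis23 : Disjoint ({Stmt5Aux.kidx k} : Set (Fin (p+1))) S3 := by
      rw [Set.disjoint_left]
      intro i hi hi'
      rw [Set.mem_singleton_iff] at hi
      subst hi
      simp only [hS3def, Set.mem_setOf_eq, Stmt5Aux.kidx] at hi'
      omega
    have hind12 : Indep (⨆ i ∈ S1, poSigma X Ypo i) (⨆ i ∈ S23, poSigma X Ypo i) μ := indep_iSup_of_disjoint h_le hindep hdis12
    have hind23 : Indep (⨆ i ∈ ({Stmt5Aux.kidx k} : Set (Fin (p+1))), poSigma X Ypo i) (⨆ i ∈ S3, poSigma X Ypo i) μ :=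
      indep_iSup_of_disjoint h_le hindep hdis23
    have hk_le23 : poSigma X Ypo (Stmt5Aux.kidx k) ≤ (⨆ i ∈ S23, poSigma X Ypo i) :=
      le_biSup (poSigma X Ypo) (show Stmt5Aux.kidx k ∈ S23 from le_refl k.1)
    have h3_le23 : (⨆ i ∈ S3, poSigma X Ypo i) ≤ (⨆ i ∈ S23, poSigma X Ypo i) := biSup_mono (fun i hi => show k.1 ≤ i.1 from le_of_lt hi)
    have hfac2 : ∀ A C : Set Ω, MeasurableSet[(⨆ i ∈ S1, poSigma X Ypo i)] A → MeasurableSet[(⨆ i ∈ S23, poSigma X Ypo i)] C →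
        μ (A ∩ C) = μ A * μ C :=
      fun A C hA hC => (Indep_iff _ _ _).mp hind12 A C hA hC
    have hfacBC : ∀ Bv C : Set Ω, MeasurableSet[poSigma X Ypo (Stmt5Aux.kidx k)] Bv →
        MeasurableSet[(⨆ i ∈ S3, poSigma X Ypo i)] C → μ (Bv ∩ C) = μ Bv * μ C :=
      fun Bv C hBv hC => (Indep_iff _ _ _).mp hind23 Bv C
        ((le_biSup (poSigma X Ypo) (Set.mem_singleton _)) _ hBv) hC
    have hfac3 : ∀ A Bv C : Set Ω, MeasurableSet[(⨆ i ∈ S1, poSigma X Ypo i)] A →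
        MeasurableSet[poSigma X Ypo (Stmt5Aux.kidx k)] Bv → MeasurableSet[(⨆ i ∈ S3, poSigma X Ypo i)] C →
        μ (A ∩ (Bv ∩ C)) = μ A * (μ Bv * μ C) := by
      intro A Bv C hA hBv hC
      rw [hfac2 A (Bv ∩ C) hA ((hk_le23 _ hBv).inter (h3_le23 _ hC)), hfacBC Bv C hBv hC]
    -- characterization of B
    have hobs_iff : ∀ ω : Ω, (∀ i, obsX X i ω = x i) ↔
        (∀ j : Fin p, X j (fun i => x ⟨i.1, lt_trans i.isLt j.isLt⟩) ω = x j) := by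
      intro ω
      have h := Stmt5Aux.obs_prefix_iff X x ω p
      constructor
      · intro hh j; exact h.mp (fun j' _ => hh j') j j.isLt
      · intro hh i; exact h.mpr (fun j _ => hh j) i i.isLt
    have hBchar : ∀ ω : Ω, ω ∈ B ↔
        ((∀ j : Fin p, X j (fun i => x ⟨i.1, lt_trans i.isLt j.isLt⟩) ω = x j) ∧
          Ypo x ω = true) := by
      intro ω
      constructor
      · rintro ⟨h1, h2⟩
        exact ⟨(hobs_iff ω).mp h1, by rw [← Stmt5Aux.obsY_eq X Ypo x ω h1]; exact h2⟩
      · rintro ⟨h1, h2⟩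
        have hobs := (hobs_iff ω).mpr h1
        exact ⟨hobs, show obsY X Ypo ω = true by rw [Stmt5Aux.obsY_eq X Ypo x ω hobs]; exact h2⟩
    have hBeq : B = E1 ∩ (Ekx ∩ G') := by
      ext ω
      rw [hBchar ω]
      simp only [hE1def, hEkxdef, hG'def, Set.mem_inter_iff, Set.mem_setOf_eq]
      constructor
      · rintro ⟨h1, h2⟩
        exact ⟨fun j _ => h1 j, by rw [← hxk]; exact h1 k, fun j _ => h1 j, h2⟩
      · rintro ⟨h1, hk1, h3, h2⟩
        refine ⟨fun j => ?_, h2⟩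
        rcases lt_trichotomy j.1 k.1 with h | h | h
        · exact h1 j h
        · have hjk : j = k := Fin.ext h
          rw [hjk, hxk]; exact hk1
        · exact h3 j h
    -- values of the potential outcomes on B
    have hY1B : ∀ ω ∈ B, intY X Ypo {k} (fun _ => true) ω = true := by
      intro ω hω
      rw [Stmt5Aux.intY_k_obs X Ypo k _ ω (by rw [hω.1 k, hxk])]
      exact hω.2
    have hY0B : ∀ ω ∈ B, intY X Ypo {k} (fun _ => false) ω
        = intY X Ypo (Stmt5Aux.Sle k) x0 ω := by
      intro ω hω
      have h1 : intY X Ypo {k} (fun _ => false) ω = intY X Ypo {k} x0 ω :=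
        Stmt5Aux.intY_congr_k X Ypo k _ x0 ω (by simp [hx0def])
      rw [h1]
      unfold intY
      congr 1
      funext i
      refine Stmt5Aux.intX_singleton_eq_Sle X k x x0 ω (fun j hj => ?_) (fun j _ => hω.1 j) i
      have hne : j ≠ k := by rintro rfl; omega
      simp [hx0def, hne]
    have hCB : causeEvent X Ypo {k} ∩ B = B ∩ T0 := by
      ext ω
      simp only [Set.mem_inter_iff, hT0def, Set.mem_setOf_eq]
      constructor
      · rintro ⟨hc, hB⟩
        refine ⟨hB, ?_⟩
        have hcc := (hC ω).mp hc
        rw [hY1B ω hB] at hcc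
        rw [← hY0B ω hB]
        cases hEq : intY X Ypo {k} (fun _ => false) ω
        · rfl
        · exact absurd hEq hcc
      · rintro ⟨hB, hT⟩
        refine ⟨(hC ω).mpr ?_, hB⟩
        rw [hY1B ω hB, hY0B ω hB, hT]
        exact Bool.false_ne_true
    -- the root event
    have hres : ∀ (v : Fin p → Bool) (ω : Ω),
        intX X (Finset.univ.filter (fun j => j < k)) v k ω
          = X k (fun j => v ⟨j.1, lt_trans j.isLt k.isLt⟩) ω := by
      intro v ω
      rw [intX, if_neg (by simp)]
      congr 1
      funext j
      rw [intX, if_pos (show (⟨j.1, lt_trans j.isLt k.isLt⟩ : Fin p) ∈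
        Finset.univ.filter (fun j' => j' < k) from
        Finset.mem_filter.mpr ⟨Finset.mem_univ _, Fin.lt_def.mpr j.isLt⟩)]
    have hRchar : ∀ ω ∈ B, intY X Ypo (Stmt5Aux.Sle k) x0 ω = false →
        (ω ∈ rootEvent X Ypo {k} (Finset.univ.filter (fun j => j < k)) ↔
          X k (fun _ => false) ω = true) := by
      intro ω hB hT
      have hY0 : intY X Ypo {k} (fun _ => false) ω = false := (hY0B ω hB).trans hT
      have hY1 := hY1B ω hB
      have hxpk : X k (fun i => x ⟨i.1, lt_trans i.isLt k.isLt⟩) ω = true := by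
        rw [← hxk]; exact ((hBchar ω).mp hB).1 k
      constructor
      · intro hR
        have h1 := hR (fun _ => false) (fun _ => true)
        have e0 : intY X Ypo {k}
            (fun i => intX X (Finset.univ.filter (fun j => j < k)) (fun _ => false) i ω) ω
            = intY X Ypo {k} (fun _ => X k (fun _ => false) ω) ω :=
          Stmt5Aux.intY_congr_k X Ypo k _ _ ω
            (by show intX X (Finset.univ.filter (fun j => j < k)) (fun _ => false) k ω = _
                rw [hres])
        have e1 : intY X Ypo {k}
            (fun i => intX X (Finset.univ.filter (fun j => j < k)) (fun _ => true) i ω) ω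
            = intY X Ypo {k} (fun _ => X k (fun _ => true) ω) ω :=
          Stmt5Aux.intY_congr_k X Ypo k _ _ ω
            (by show intX X (Finset.univ.filter (fun j => j < k)) (fun _ => true) k ω = _
                rw [hres])
        have hab : intY X Ypo {k} (fun _ => X k (fun _ => false) ω) ω
            = intY X Ypo {k} (fun _ => X k (fun _ => true) ω) ω :=
          (e0.symm.trans h1).trans e1
        have hble : X k (fun i => x ⟨i.1, lt_trans i.isLt k.isLt⟩) ω
            ≤ X k (fun _ => true) ω := hXmono k ω (fun i => Bool.le_true _)
        rw [hxpk] at hble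
        have hb : X k (fun _ => true) ω = true := Stmt5Aux.true_le_iff hble
        rw [hb] at hab
        cases ha : X k (fun _ => false) ω
        · rw [ha] at hab
          rw [hY0, hY1] at hab
          exact absurd hab Bool.false_ne_true
        · rfl
      · intro h0 v v'
        have hall : ∀ w : Fin p → Bool,
            X k (fun j => w ⟨j.1, lt_trans j.isLt k.isLt⟩) ω = true := by
          intro w
          have hle : X k (fun _ => false) ω
              ≤ X k (fun j => w ⟨j.1, lt_trans j.isLt k.isLt⟩) ω :=
            hXmono k ω (fun i => Bool.false_le _)
          rw [h0] at hle
          exact Stmt5Aux.true_le_iff hle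
        have e := fun w : Fin p → Bool => Stmt5Aux.intY_congr_k X Ypo k
          (fun i => intX X (Finset.univ.filter (fun j => j < k)) w i ω) (fun _ => true) ω
          (by show intX X (Finset.univ.filter (fun j => j < k)) w k ω = _
              rw [hres]; exact hall w)
        rw [e v, e v']
    -- the three set identities
    have hCRB : (causeEvent X Ypo {k} ∩
        rootEvent X Ypo {k} (Finset.univ.filter (fun j => j < k))) ∩ B
        = E1 ∩ (Ek0 ∩ G) := by
      ext ω
      constructor
      · rintro ⟨⟨hc, hr⟩, hB⟩
        have hcb : ω ∈ B ∩ T0 := hCB ▸ (⟨hc, hB⟩ : ω ∈ causeEvent X Ypo {k} ∩ B)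
        have hT : intY X Ypo (Stmt5Aux.Sle k) x0 ω = false := hcb.2
        have h0 : X k (fun _ => false) ω = true := (hRchar ω hB hT).mp hr
        have hB' : ω ∈ E1 ∩ (Ekx ∩ G') := hBeq ▸ hB
        exact ⟨hB'.1, h0, hB'.2.2, hT⟩
      · rintro ⟨h1, h0, hg', hT⟩
        have hkx : ω ∈ Ekx := by
          have hle : X k (fun _ => false) ω
              ≤ X k (fun i => x ⟨i.1, lt_trans i.isLt k.isLt⟩) ω :=
            hXmono k ω (fun i => Bool.false_le _)
          rw [h0] at hle
          exact Stmt5Aux.true_le_iff hle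
        have hB : ω ∈ B := by rw [hBeq]; exact ⟨h1, hkx, hg'⟩
        have hr := (hRchar ω hB hT).mpr h0
        have hc : ω ∈ causeEvent X Ypo {k} :=
          (show ω ∈ causeEvent X Ypo {k} ∩ B from hCB.symm ▸ (⟨hB, hT⟩ : ω ∈ B ∩ T0)).1
        exact ⟨⟨hc, hr⟩, hB⟩
    have hCBeq : causeEvent X Ypo {k} ∩ B = E1 ∩ (Ekx ∩ G) := by
      rw [hCB, hBeq, hGdef]
      ext ω
      simp only [Set.mem_inter_iff]
      tauto
    -- measure factorizations
    have hmCRB : μ ((causeEvent X Ypo {k} ∩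
        rootEvent X Ypo {k} (Finset.univ.filter (fun j => j < k))) ∩ B)
        = μ E1 * (μ Ek0 * μ G) := by
      rw [hCRB]; exact hfac3 _ _ _ hE1m hEk0m hGm
    have hmCB : μ (causeEvent X Ypo {k} ∩ B) = μ E1 * (μ Ekx * μ G) := by
      rw [hCBeq]; exact hfac3 _ _ _ hE1m hEkxm hGm
    have hmB : μ B = μ E1 * (μ Ekx * μ G') := by
      rw [hBeq]; exact hfac3 _ _ _ hE1m hEkxm hG'm
    -- prefix events
    have hprefx : evPrefix X k x = E1 := by
      ext ω
      simp only [evPrefix, Set.mem_setOf_eq, hE1def]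
      have h := Stmt5Aux.obs_prefix_iff X x ω k.1
      constructor
      · intro hh; exact h.mp (fun j hj => hh j (Fin.lt_def.mpr hj))
      · intro hh j hj; exact h.mpr hh j (Fin.lt_def.mp hj)
    have hprefz : evPrefix X k (fun _ => false) = E1z := by
      ext ω
      simp only [evPrefix, Set.mem_setOf_eq, hE1zdef]
      have h := Stmt5Aux.obs_prefix_iff X (fun _ => false) ω k.1
      constructor
      · intro hh; exact h.mp (fun j hj => hh j (Fin.lt_def.mpr hj))
      · intro hh j hj; exact h.mpr hh j (Fin.lt_def.mp hj)
    have hnumx : {ω | obsX X k ω = true} ∩ evPrefix X k x = E1 ∩ Ekx := by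
      rw [hprefx]
      ext ω
      simp only [Set.mem_inter_iff, Set.mem_setOf_eq, hE1def, hEkxdef]
      constructor
      · rintro ⟨ho, h1⟩
        refine ⟨h1, ?_⟩
        rw [← Stmt5Aux.obsX_at X k x ω
          (fun j hj => (Stmt5Aux.obs_prefix_iff X x ω k.1).mpr h1 j hj)]
        exact ho
      · rintro ⟨h1, hkk⟩
        refine ⟨?_, h1⟩
        rw [Stmt5Aux.obsX_at X k x ω
          (fun j hj => (Stmt5Aux.obs_prefix_iff X x ω k.1).mpr h1 j hj)]
        exact hkk
    have hnumz : {ω | obsX X k ω = true} ∩ evPrefix X k (fun _ => false) = E1z ∩ Ek0 := by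
      rw [hprefz]
      ext ω
      simp only [Set.mem_inter_iff, Set.mem_setOf_eq, hE1zdef, hEk0def]
      constructor
      · rintro ⟨ho, h1⟩
        refine ⟨h1, ?_⟩
        rw [← Stmt5Aux.obsX_at X k (fun _ => false) ω
          (fun j hj => (Stmt5Aux.obs_prefix_iff X (fun _ => false) ω k.1).mpr h1 j hj)]
        exact ho
      · rintro ⟨h1, hkk⟩
        refine ⟨?_, h1⟩
        rw [Stmt5Aux.obsX_at X k (fun _ => false) ω
          (fun j hj => (Stmt5Aux.obs_prefix_iff X (fun _ => false) ω k.1).mpr h1 j hj)]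
        exact hkk
    have hmnumx : μ (E1 ∩ Ekx) = μ E1 * μ Ekx := hfac2 _ _ hE1m (hk_le23 _ hEkxm)
    have hmnumz : μ (E1z ∩ Ek0) = μ E1z * μ Ek0 := hfac2 _ _ hE1zm (hk_le23 _ hEk0m)
    -- real-number bookkeeping
    have hBpos : (0:ℝ) < (μ B).toReal := ENNReal.toReal_pos hpos1.ne' (measure_ne_top μ B)
    have hBtoReal : (μ B).toReal = (μ E1).toReal * ((μ Ekx).toReal * (μ G').toReal) := by
      rw [hmB, ENNReal.toReal_mul, ENNReal.toReal_mul]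
    have ha : (μ E1).toReal ≠ 0 := by
      intro h
      rw [hBtoReal, h, zero_mul] at hBpos
      exact lt_irrefl _ hBpos
    have hex : (μ Ekx).toReal ≠ 0 := by
      intro h
      rw [hBtoReal, h, zero_mul, mul_zero] at hBpos
      exact lt_irrefl _ hBpos
    have hg' : (μ G').toReal ≠ 0 := by
      intro h
      rw [hBtoReal, h, mul_zero, mul_zero] at hBpos
      exact lt_irrefl _ hBpos
    have haz : (μ E1z).toReal ≠ 0 := by
      rw [← hprefz]
      exact (ENNReal.toReal_pos hpos2.ne' (measure_ne_top μ _)).ne'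
    -- ambient measurability
    have hM1le : (⨆ i ∈ S1, poSigma X Ypo i) ≤ (inferInstance : MeasurableSpace Ω) := iSup₂_le (fun i _ => h_le i)
    have hM3le : (⨆ i ∈ S3, poSigma X Ypo i) ≤ (inferInstance : MeasurableSpace Ω) := iSup₂_le (fun i _ => h_le i)
    have hBmeas : MeasurableSet B := by
      rw [hBeq]
      exact (hM1le _ hE1m).inter (((h_le _) _ hEkxm).inter (hM3le _ hG'm))
    have hT0meas : MeasurableSet T0 := hM3le _ hT0m
    -- the PostTCE integral
    have hint : (∫ ω in B, (bR (intY X Ypo {k} (fun _ => true) ω)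
        - bR (intY X Ypo {k} (fun _ => false) ω)) ∂μ) = (μ (B ∩ T0)).toReal := by
      rw [setIntegral_congr_fun hBmeas
        (g := fun ω => Set.indicator T0 (fun _ => (1:ℝ)) ω) ?_]
      · rw [setIntegral_indicator hT0meas, setIntegral_const, smul_eq_mul, mul_one]
        rfl
      · intro ω hω
        show bR (intY X Ypo {k} (fun _ => true) ω) - bR (intY X Ypo {k} (fun _ => false) ω)
          = Set.indicator T0 (fun _ => (1:ℝ)) ω
        have h1 := hY1B ω hω
        have h0 := hY0B ω hω
        by_cases hT : intY X Ypo (Stmt5Aux.Sle k) x0 ω = false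
        · have hmem : ω ∈ T0 := hT
          rw [Set.indicator_of_mem hmem, h1, h0, hT]
          simp [bR]
        · have hTt : intY X Ypo (Stmt5Aux.Sle k) x0 ω = true := by
            cases hq : intY X Ypo (Stmt5Aux.Sle k) x0 ω
            · exact absurd hq hT
            · rfl
          rw [Set.indicator_of_notMem (show ω ∉ T0 from fun hmem => hT hmem), h1, h0, hTt]
          simp [bR]
    have hPost : PostTCE μ X Ypo {k} B
        = (μ (causeEvent X Ypo {k} ∩ B)).toReal / (μ B).toReal := by
      unfold PostTCE condExpEvent
      rw [hint, hCB]
    -- the prX values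
    have hprx : prX μ X k x = (μ Ekx).toReal := by
      unfold prX condProb
      rw [hnumx, hprefx, hmnumx, ENNReal.toReal_mul]
      rw [mul_comm, mul_div_assoc, div_self ha, mul_one]
    have hprz : prX μ X k (fun _ => false) = (μ Ek0).toReal := by
      unfold prX condProb
      rw [hnumz, hprefz, hmnumz, ENNReal.toReal_mul]
      rw [mul_comm, mul_div_assoc, div_self haz, mul_one]
    -- conclusion
    unfold PRC condProb
    rw [hmCRB, hPost, hmCB, hmB, hprx, hprz]
    rw [ENNReal.toReal_mul, ENNReal.toReal_mul, ENNReal.toReal_mul, ENNReal.toReal_mul,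
      ENNReal.toReal_mul, ENNReal.toReal_mul]
    field_simp
end

section
/- Assume the potential-outcome model with the Monotonicity assumption. Let K = {1,…,k} for some 1 ≤ k ≤ p (an initial segment, so A_K = ∅ and the root event R_K = Ω by convention), and let B be an event with P(B) > 0. Then PRC(X_K ⇒ Y | B) = E[Y_{K,1} − Y_{K,0} | B], where 1, 0 ∈ {0,1}^K denote the all-ones and all-zeros interventions; that is, PRC(X_K ⇒ Y | B) = PostTCE(X_K ⇒ Y | B) where PostTCE(X_K ⇒ Y | B) = E[Y_{K,1} − Y_{K,0} | B]. (Property 3(b).) -/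
open MeasureTheory ProbabilityTheory
open scoped Classical

section AuxStmt6

variable {Ω : Type*} {p : ℕ}

lemma intX_mono_aux (X : (i : Fin p) → (Fin i.1 → Bool) → Ω → Bool)
    (hXmono : ∀ (i : Fin p) (ω : Ω), Monotone (fun xbar : Fin i.1 → Bool => X i xbar ω))
    (S : Finset (Fin p)) {u u' : Fin p → Bool} (h : u ≤ u') :
    ∀ n, ∀ i : Fin p, i.1 < n → ∀ ω, intX X S u i ω ≤ intX X S u' i ω := by
  intro n
  induction n with
  | zero => intro i hi; omega
  | succ n ih =>
    intro i hi ω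
    rw [intX, intX]
    by_cases hS : i ∈ S
    · simp only [hS, if_true]; exact h i
    · simp only [hS, if_false]
      exact hXmono i ω (fun j =>
        ih ⟨j.1, lt_trans j.isLt i.isLt⟩ (lt_of_lt_of_le j.isLt (Nat.lt_succ_iff.mp hi)) ω)

lemma intX_mono (X : (i : Fin p) → (Fin i.1 → Bool) → Ω → Bool)
    (hXmono : ∀ (i : Fin p) (ω : Ω), Monotone (fun xbar : Fin i.1 → Bool => X i xbar ω))
    (S : Finset (Fin p)) {u u' : Fin p → Bool} (h : u ≤ u') (i : Fin p) (ω : Ω) :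
    intX X S u i ω ≤ intX X S u' i ω :=
  intX_mono_aux X hXmono S h (i.1 + 1) i (Nat.lt_succ_self _) ω

lemma intX_congr_aux (X : (i : Fin p) → (Fin i.1 → Bool) → Ω → Bool)
    (S : Finset (Fin p)) {u u' : Fin p → Bool} (h : ∀ j ∈ S, u j = u' j) :
    ∀ n, ∀ i : Fin p, i.1 < n → ∀ ω, intX X S u i ω = intX X S u' i ω := by
  intro n
  induction n with
  | zero => intro i hi; omega
  | succ n ih =>
    intro i hi ω
    rw [intX, intX]
    by_cases hS : i ∈ S
    · simp only [hS, if_true]; exact h i hS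
    · simp only [hS, if_false]
      congr 1
      funext j
      exact ih ⟨j.1, lt_trans j.isLt i.isLt⟩ (lt_of_lt_of_le j.isLt (Nat.lt_succ_iff.mp hi)) ω

lemma intX_congr (X : (i : Fin p) → (Fin i.1 → Bool) → Ω → Bool)
    (S : Finset (Fin p)) {u u' : Fin p → Bool} (h : ∀ j ∈ S, u j = u' j) (i : Fin p) (ω : Ω) :
    intX X S u i ω = intX X S u' i ω :=
  intX_congr_aux X S h (i.1 + 1) i (Nat.lt_succ_self _) ω

lemma meas_comp [MeasurableSpace Ω] {ι : Type*} [Fintype ι]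
    (F : (ι → Bool) → Ω → Bool) (g : ι → Ω → Bool)
    (hF : ∀ c, Measurable (F c)) (hg : ∀ j, Measurable (g j)) :
    Measurable (fun ω => F (fun j => g j ω) ω) := by
  apply measurable_to_countable'
  intro b
  have hrw : (fun ω => F (fun j => g j ω) ω) ⁻¹' {b}
      = ⋃ c : ι → Bool, ((⋂ j, {ω | g j ω = c j}) ∩ (F c ⁻¹' {b})) := by
    ext ω
    simp only [Set.mem_preimage, Set.mem_singleton_iff, Set.mem_iUnion, Set.mem_inter_iff,
      Set.mem_iInter, Set.mem_setOf_eq]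
    constructor
    · intro h; exact ⟨fun j => g j ω, fun j => rfl, h⟩
    · rintro ⟨c, hc, hFc⟩
      have : (fun j => g j ω) = c := funext hc
      rw [this]; exact hFc
  rw [hrw]
  exact MeasurableSet.iUnion fun c =>
    (MeasurableSet.iInter fun j => (hg j) (measurableSet_singleton (c j))).inter
      (hF c (measurableSet_singleton b))

lemma intX_meas_aux [MeasurableSpace Ω] (X : (i : Fin p) → (Fin i.1 → Bool) → Ω → Bool)
    (hXmeas : ∀ (i : Fin p) (xbar : Fin i.1 → Bool), Measurable (X i xbar))
    (S : Finset (Fin p)) (u : Fin p → Bool) :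
    ∀ n, ∀ i : Fin p, i.1 < n → Measurable (fun ω => intX X S u i ω) := by
  intro n
  induction n with
  | zero => intro i hi; omega
  | succ n ih =>
    intro i hi
    have hrw : (fun ω => intX X S u i ω)
        = fun ω => if i ∈ S then u i
            else X i (fun j => intX X S u ⟨j.1, lt_trans j.isLt i.isLt⟩ ω) ω := by
      funext ω; rw [intX]
    rw [hrw]
    by_cases hS : i ∈ S
    · simp only [hS, if_true]; exact measurable_const
    · simp only [hS, if_false]
      exact meas_comp (X i) (fun j ω => intX X S u ⟨j.1, lt_trans j.isLt i.isLt⟩ ω)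
        (hXmeas i)
        (fun j => ih ⟨j.1, lt_trans j.isLt i.isLt⟩ (lt_of_lt_of_le j.isLt (Nat.lt_succ_iff.mp hi)))

lemma intX_meas [MeasurableSpace Ω] (X : (i : Fin p) → (Fin i.1 → Bool) → Ω → Bool)
    (hXmeas : ∀ (i : Fin p) (xbar : Fin i.1 → Bool), Measurable (X i xbar))
    (S : Finset (Fin p)) (u : Fin p → Bool) (i : Fin p) :
    Measurable (fun ω => intX X S u i ω) :=
  intX_meas_aux X hXmeas S u (i.1 + 1) i (Nat.lt_succ_self _)

lemma intY_meas [MeasurableSpace Ω] (X : (i : Fin p) → (Fin i.1 → Bool) → Ω → Bool)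
    (Ypo : (Fin p → Bool) → Ω → Bool)
    (hXmeas : ∀ (i : Fin p) (xbar : Fin i.1 → Bool), Measurable (X i xbar))
    (hYmeas : ∀ x : Fin p → Bool, Measurable (Ypo x))
    (S : Finset (Fin p)) (u : Fin p → Bool) :
    Measurable (fun ω => intY X Ypo S u ω) :=
  meas_comp Ypo (fun i ω => intX X S u i ω) hYmeas (intX_meas X hXmeas S u)

end AuxStmt6

/-- Property 3(b): for an initial segment `K = {1,…,k}` (so `A_K = ∅` and the
root condition holds by convention), under monotonicity
`PRC(X_K ⇒ Y | B) = E[Y_{K,1} − Y_{K,0} | B] = PostTCE(X_K ⇒ Y | B)`. -/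
theorem stmt6 {Ω : Type*} [MeasurableSpace Ω] (μ : Measure Ω) [IsProbabilityMeasure μ]
    {p : ℕ} (X : (i : Fin p) → (Fin i.1 → Bool) → Ω → Bool)
    (Ypo : (Fin p → Bool) → Ω → Bool)
    (hXmeas : ∀ (i : Fin p) (xbar : Fin i.1 → Bool), Measurable (X i xbar))
    (hYmeas : ∀ x : Fin p → Bool, Measurable (Ypo x))
    -- Monotonicity assumption
    (hXmono : ∀ (i : Fin p) (ω : Ω), Monotone (fun xbar : Fin i.1 → Bool => X i xbar ω))
    (hYmono : ∀ ω : Ω, Monotone (fun x : Fin p → Bool => Ypo x ω))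
    (k : ℕ) (hk1 : 1 ≤ k) (hkp : k ≤ p)
    (hK : (Finset.univ.filter (fun i : Fin p => i.1 < k)).Nonempty)
    (B : Set Ω) (hBmeas : MeasurableSet B) (hBpos : 0 < μ B) :
    PRC μ X Ypo (Finset.univ.filter (fun i : Fin p => i.1 < k))
        (olSet (Finset.univ.filter (fun i : Fin p => i.1 < k)) hK ∪
          hatSet (Finset.univ.filter (fun i : Fin p => i.1 < k)) hK) B =
      PostTCE μ X Ypo (Finset.univ.filter (fun i : Fin p => i.1 < k)) B := by
  set K : Finset (Fin p) := Finset.univ.filter (fun i : Fin p => i.1 < k) with hKdef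
  have h0p : 0 < p := lt_of_lt_of_le hk1 hkp
  -- the ancestor set is empty
  have hA : olSet K hK ∪ hatSet K hK = (∅ : Finset (Fin p)) := by
    apply Finset.eq_empty_of_forall_notMem
    intro j hj
    rcases Finset.mem_union.mp hj with hj | hj
    · have hj' : j < K.min' hK := (Finset.mem_filter.mp hj).2
      have h0K : (⟨0, h0p⟩ : Fin p) ∈ K := by
        simp [hKdef]; omega
      have := Finset.min'_le K _ h0K
      have : j < (⟨0, h0p⟩ : Fin p) := lt_of_lt_of_le hj' this
      exact absurd this (by simp [Fin.lt_def])
    · obtain ⟨_, hj2, hj3⟩ := (Finset.mem_filter.mp hj).2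
      have hmax : K.max' hK ∈ K := K.max'_mem hK
      have hmaxk : (K.max' hK).1 < k := (Finset.mem_filter.mp hmax).2
      exact hj3 (by simp [hKdef]; exact lt_trans hj2 hmaxk)
  -- the root event is everything
  have hR : rootEvent X Ypo K (olSet K hK ∪ hatSet K hK) = Set.univ := by
    rw [hA]
    ext ω
    simp only [rootEvent, Set.mem_setOf_eq, Set.mem_univ, iff_true]
    intro v v'
    have : (fun i => intX X ∅ v i ω) = (fun i => intX X ∅ v' i ω) := by
      funext i
      exact intX_congr X ∅ (fun j hj => absurd hj (Finset.notMem_empty j)) i ω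
    rw [this]
  -- monotonicity of intY in the intervention
  have hYle : ∀ (u : Fin p → Bool) (ω : Ω),
      intY X Ypo K (fun _ => false) ω ≤ intY X Ypo K u ω ∧
      intY X Ypo K u ω ≤ intY X Ypo K (fun _ => true) ω := by
    intro u ω
    constructor
    · exact hYmono ω (fun i => intX_mono X hXmono K (fun j => Bool.false_le (u j)) i ω)
    · exact hYmono ω (fun i => intX_mono X hXmono K (fun j => Bool.le_true (u j)) i ω)
  -- identification of the cause event
  have hC : causeEvent X Ypo K =
      {ω | intY X Ypo K (fun _ => false) ω = false ∧ intY X Ypo K (fun _ => true) ω = true} := by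
    ext ω
    simp only [causeEvent, Set.mem_setOf_eq]
    constructor
    · rintro ⟨u, u', hne, hval⟩
      by_contra hcon
      have h01 : intY X Ypo K (fun _ => false) ω = intY X Ypo K (fun _ => true) ω := by
        have hle := (hYle (fun _ => true) ω).1
        revert hcon hle
        cases intY X Ypo K (fun _ => false) ω <;> cases intY X Ypo K (fun _ => true) ω <;> simp
      apply hval
      have e1 := le_antisymm ((hYle u ω).2) (h01 ▸ (hYle u ω).1)
      have e2 := le_antisymm ((hYle u' ω).2) (h01 ▸ (hYle u' ω).1)
      rw [e1, e2]
    · rintro ⟨h0, h1⟩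
      refine ⟨fun _ => false, fun _ => true, ?_, ?_⟩
      · intro h
        have := congrFun h ⟨0, h0p⟩
        simp at this
      · rw [h0, h1]; simp
  have hCmeas : MeasurableSet (causeEvent X Ypo K) := by
    rw [hC]
    have h0 := intY_meas X Ypo hXmeas hYmeas K (fun _ => false)
    have h1 := intY_meas X Ypo hXmeas hYmeas K (fun _ => true)
    exact (h0 (measurableSet_singleton false)).inter (h1 (measurableSet_singleton true))
  -- the integrand is the indicator of the cause event
  have hind : ∀ ω : Ω,
      bR (intY X Ypo K (fun _ => true) ω) - bR (intY X Ypo K (fun _ => false) ω)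
        = Set.indicator (causeEvent X Ypo K) (fun _ => (1 : ℝ)) ω := by
    intro ω
    have hle := (hYle (fun _ => true) ω).1
    rw [hC]
    by_cases hmem : intY X Ypo K (fun _ => false) ω = false ∧
        intY X Ypo K (fun _ => true) ω = true
    · rw [Set.indicator_of_mem (show ω ∈ _ from hmem), hmem.1, hmem.2]
      simp [bR]
    · rw [Set.indicator_of_notMem (show ω ∉ _ from hmem)]
      revert hle hmem
      cases intY X Ypo K (fun _ => false) ω <;> cases intY X Ypo K (fun _ => true) ω <;>
        simp [bR]
  -- compute both sides
  rw [PRC, condProb, hR, Set.inter_univ, PostTCE, condExpEvent]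
  congr 1
  symm
  calc (∫ ω in B, (bR (intY X Ypo K (fun _ => true) ω)
          - bR (intY X Ypo K (fun _ => false) ω)) ∂μ)
      = ∫ ω in B, Set.indicator (causeEvent X Ypo K) (fun _ => (1 : ℝ)) ω ∂μ := by
        exact integral_congr_ae (Filter.Eventually.of_forall fun ω => hind ω)
    _ = ∫ _ω in B ∩ causeEvent X Ypo K, (1 : ℝ) ∂μ := setIntegral_indicator hCmeas
    _ = (μ (B ∩ causeEvent X Ypo K)).toReal := by simp; rfl
    _ = (μ (causeEvent X Ypo K ∩ B)).toReal := by rw [Set.inter_comm]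
end

section
/- Consider a causal chain X₁ → X₂ → ⋯ → X_p → Y at the individual level: fix functions g₂,…,g_p : {0,1} → {0,1} and h : {0,1} → {0,1}, where g_i is the individual's structural response of X_i to its parent X_{i−1} and h is the response of Y to X_p. For j ≤ i define G_{j→i} : {0,1} → {0,1} by G_{i→i}(a) = a and G_{j→i}(a) = g_i(g_{i−1}(⋯ g_{j+1}(a) ⋯)), and define H_k(a) = h(G_{k→p}(a)) (the potential value of Y under do(X_k = a)). Fix 1 ≤ k ≤ p and define: the cause condition C_k ≡ 'H_k is not constant'; the root condition R_k ≡ 'for all u, u' ∈ {0,1}^{k−1}, H_k(g_k(u_{k−1})) = H_k(g_k(u'_{k−1}))' for k ≥ 2 (under a joint intervention on X₁,…,X_{k−1}, X_k responds only to the intervened value of its parent), with R₁ holding trivially. Then C_k and R_k both hold if and only if h, g_p, g_{p−1}, …, g_{k+1} are all nonconstant and (k = 1 or g_k is constant). (Corollary: root cause for a causal chain diagram — X_k is the root cause of Y iff L_Y = L_{X_p} = ⋯ = L_{X_{k+1}} = 1 and L_{X_k} = 0, where L_{X_i} = 1 iff g_i is nonconstant, L_{X₁} = 0, and L_Y = 1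 iff h is nonconstant.) -/
/-!
Along the chain, `Y_{X_k = a} = h (G_{k→p} a)` is a composite of maps `Bool → Bool`, and a
composite `f ∘ s` of such maps is nonconstant exactly when both `f` and `s` are. Hence `X_k` is a
cause of `Y` iff `h, g_p, …, g_{k+1}` are all nonconstant. For `k ≥ 2`, intervening on the
ancestors feeds arbitrary values into `g_k`, so the root condition says that `H_k ∘ g_k` is
constant; given that `H_k` is nonconstant, this means that `g_k` is constant.
-/

/-- `Gchain g j i a = G_{j→i}(a)`: the composite structural response along the chain from
`X_j` to `X_i`, with `G_{i→i}(a) = a` and `G_{j→i}(a) = g_i(G_{j→(i−1)}(a))` for `i > j`. -/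
def Gchain (g : ℕ → Bool → Bool) (j : ℕ) : ℕ → Bool → Bool
  | 0 => fun a => a
  | (i + 1) => fun a => if i + 1 ≤ j then a else g (i + 1) (Gchain g j i a)

namespace Bool

theorem exists_apply_ne_iff {β : Type*} (f : Bool → β) :
    (∃ a b : Bool, f a ≠ f b) ↔ f true ≠ f false := by
  constructor
  · rintro ⟨a, b, hab⟩
    cases a <;> cases b <;> simp_all [eq_comm]
  · exact fun h => ⟨true, false, h⟩

theorem comp_true_ne_comp_false_iff (f s : Bool → Bool) :
    f (s true) ≠ f (s false) ↔ f true ≠ f false ∧ s true ≠ s false := by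
  cases s true <;> cases s false <;> cases f true <;> cases f false <;> simp_all

end Bool

namespace Gchain

variable (g : ℕ → Bool → Bool) {j i : ℕ}

theorem apply_of_le (hij : i ≤ j) (a : Bool) : Gchain g j i a = a := by
  induction i with
  | zero => rfl
  | succ i _ => simp only [Gchain, if_pos hij]

theorem succ_apply_of_lt (hji : j < i + 1) (a : Bool) :
    Gchain g j (i + 1) a = g (i + 1) (Gchain g j i a) := by
  simp only [Gchain, if_neg (Nat.not_le.mpr hji)]

theorem comp_true_ne_comp_false_iff (k p : ℕ) (h : Bool → Bool) :
    h (Gchain g k p true) ≠ h (Gchain g k p false) ↔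
      h true ≠ h false ∧ ∀ i, k + 1 ≤ i → i ≤ p → g i true ≠ g i false := by
  induction p generalizing h with
  | zero =>
    simp only [apply_of_le g (Nat.zero_le k)]
    exact ⟨fun hh => ⟨hh, fun i hi hip => by omega⟩, And.left⟩
  | succ p ih =>
    rcases Nat.lt_or_ge k (p + 1) with hkp | hpk
    · simp only [succ_apply_of_lt g hkp]
      rw [ih (fun a => h (g (p + 1) a)), Bool.comp_true_ne_comp_false_iff]
      constructor
      · rintro ⟨⟨hh, hgp⟩, hrest⟩
        refine ⟨hh, fun i hki hip => ?_⟩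
        rcases Nat.lt_or_ge i (p + 1) with hi | hi
        · exact hrest i hki (by omega)
        · obtain rfl : i = p + 1 := by omega
          exact hgp
      · rintro ⟨hh, hall⟩
        exact ⟨⟨hh, hall (p + 1) (by omega) le_rfl⟩, fun i hki hip => hall i hki (by omega)⟩
    · simp only [apply_of_le g hpk]
      exact ⟨fun hh => ⟨hh, fun i hi hip => by omega⟩, And.left⟩

end Gchain

theorem forall_eq_at_last_index_iff {β : Type*} (F : Bool → β) {k : ℕ} (hk : 1 ≤ k) :
    (∀ u u' : Fin (k - 1) → Bool, ∀ hlt : k - 2 < k - 1,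
        F (u ⟨k - 2, hlt⟩) = F (u' ⟨k - 2, hlt⟩)) ↔
      k = 1 ∨ F true = F false := by
  constructor
  · intro hroot
    by_cases hk1 : k = 1
    · exact Or.inl hk1
    · exact Or.inr (hroot (fun _ => true) (fun _ => false) (by omega))
  · rintro (rfl | hF) u u' hlt
    · omega
    · have hconst : ∀ a b : Bool, F a = F b := by
        intro a b; cases a <;> cases b <;> simp [hF]
      exact hconst _ _

theorem stmt7_general (p : ℕ) (g : ℕ → Bool → Bool) (h : Bool → Bool) (k : ℕ)
    (hk1 : 1 ≤ k) :
    ((∃ a b : Bool, h (Gchain g k p a) ≠ h (Gchain g k p b)) ∧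
      (∀ u u' : Fin (k - 1) → Bool, ∀ hlt : k - 2 < k - 1,
        h (Gchain g k p (g k (u ⟨k - 2, hlt⟩))) =
          h (Gchain g k p (g k (u' ⟨k - 2, hlt⟩))))) ↔
      ((h true ≠ h false) ∧
        (∀ i : ℕ, k + 1 ≤ i → i ≤ p → g i true ≠ g i false) ∧
        (k = 1 ∨ g k true = g k false)) := by
  have hcause := Gchain.comp_true_ne_comp_false_iff g k p h
  have hcomp := Bool.comp_true_ne_comp_false_iff (fun a => h (Gchain g k p a)) (g k)
  have hroot := forall_eq_at_last_index_iff (fun a => h (Gchain g k p (g k a))) hk1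
  beta_reduce at hcomp hroot
  rw [Bool.exists_apply_ne_iff, hroot]
  tauto

/-- root cause for a causal chain diagram: with `H_k(a) = h(G_{k→p}(a))`, the
cause condition (`H_k` nonconstant) and the root condition (the nested counterfactual
`H_k(g_k(u_{k−1}))` does not depend on the intervention `u ∈ {0,1}^{k−1}` on the ancestors)
hold together iff `h, g_p, …, g_{k+1}` are all nonconstant and (`k = 1` or `g_k` is
constant). -/
theorem stmt7 (p : ℕ) (g : ℕ → Bool → Bool) (h : Bool → Bool) (k : ℕ)
    (hk1 : 1 ≤ k) (hkp : k ≤ p) :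
    ((∃ a b : Bool, h (Gchain g k p a) ≠ h (Gchain g k p b)) ∧
      (∀ u u' : Fin (k - 1) → Bool, ∀ hlt : k - 2 < k - 1,
        h (Gchain g k p (g k (u ⟨k - 2, hlt⟩))) =
          h (Gchain g k p (g k (u' ⟨k - 2, hlt⟩))))) ↔
      ((h true ≠ h false) ∧
        (∀ i : ℕ, k + 1 ≤ i → i ≤ p → g i true ≠ g i false) ∧
        (k = 1 ∨ g k true = g k false)) :=
  stmt7_general p g h k hk1
end

section
/- Define f₂ : {0,1} → {0,1} by f₂(x₁) = x₁ and f : {0,1}² → {0,1} by f(x₂, x₃) = x₂·x₃ + (1 − x₂)·(1 − x₃). Fix arbitrary a₁, a₃ ∈ {0,1} (the individual's exogenous values of X₁ and X₃). Then: (i) the map b ↦ f(f₂(a₁), b), which is the potential outcome of Y under do(X₃ = b), is not constant (so X₃ is an individual cause of Y); (ii) the potential value of X₃ under any intervention on (X₁, X₂) equals a₃, so all nested counterfactuals Y_{(X₃)_u} coincide and the root condition holds for X₃ — hence X₃ is a root cause of Y; (iii) the map (b₂, b₃) ↦ f(b₂, b₃) is not constant (so the set (X₂, X₃) is an individual cause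 of Y); (iv) f(f₂(1), a₃) ≠ f(f₂(0), a₃), i.e., the nested counterfactual Y_{(X₂,X₃)_{X₁=c}} depends on c, so the root condition fails for (X₂, X₃). Consequently, the root-cause property is not monotone under taking supersets of the candidate variable set. -/
/-! `f` is XNOR on `Fin 2`, i.e. the indicator of `x₂ = x₃`, so it is injective in each argument:
flipping `X₃` (with `X₂` fixed) or flipping `X₁`, and with it `X₂` (with `X₃` fixed), flips `Y`.
The root condition for `X₃` holds trivially, since `X₃` is exogenous. -/

namespace Fin

theorem mul_add_one_sub_mul_one_sub_injective (x : Fin 2) :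
    Function.Injective fun y : Fin 2 => x * y + (1 - x) * (1 - y) := by
  fin_cases x <;> decide

theorem mul_add_one_sub_mul_one_sub_injective_left (y : Fin 2) :
    Function.Injective fun x : Fin 2 => x * y + (1 - x) * (1 - y) := by
  simpa only [mul_comm] using mul_add_one_sub_mul_one_sub_injective y

end Fin

/-- counterexample in the proof of Property 2(a): structural equations
`X₂ = f₂(X₁) = X₁`, `Y = f(X₂, X₃) = X₂X₃ + (1−X₂)(1−X₃)`, with `X₁, X₃` exogenous taking
values `a₁, a₃`. Then `X₃` is a root cause of `Y` ((i) and (ii)), while the superset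
`(X₂, X₃)` is an individual cause ((iii)) failing the root condition ((iv)); hence the
root-cause property is not monotone under supersets. -/
theorem stmt10 (a₁ a₃ : Fin 2)
    (f₂ : Fin 2 → Fin 2) (hf₂ : ∀ x₁, f₂ x₁ = x₁)
    (f : Fin 2 → Fin 2 → Fin 2) (hf : ∀ x₂ x₃, f x₂ x₃ = x₂ * x₃ + (1 - x₂) * (1 - x₃))
    (X3po : Fin 2 × Fin 2 → Fin 2) (hX3 : ∀ u, X3po u = a₃) :
    -- (i) X₃ is an individual cause of Y
    (∃ b b' : Fin 2, f (f₂ a₁) b ≠ f (f₂ a₁) b') ∧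
    -- (ii) the nested counterfactuals Y_{(X₃)_u} coincide: the root condition holds for X₃
    (∀ u u' : Fin 2 × Fin 2, f (f₂ a₁) (X3po u) = f (f₂ a₁) (X3po u')) ∧
    -- (iii) the set (X₂, X₃) is an individual cause of Y
    (∃ q q' : Fin 2 × Fin 2, f q.1 q.2 ≠ f q'.1 q'.2) ∧
    -- (iv) the root condition fails for (X₂, X₃)
    (f (f₂ 1) a₃ ≠ f (f₂ 0) a₃) := by
  have hf_right (x : Fin 2) : Function.Injective (f x) := by
    simpa only [← hf] using Fin.mul_add_one_sub_mul_one_sub_injective x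
  have hf_left (y : Fin 2) : Function.Injective (f · y) := by
    simpa only [← hf] using Fin.mul_add_one_sub_mul_one_sub_injective_left y
  refine ⟨⟨0, 1, (hf_right _).ne (by decide)⟩, fun u u' => by rw [hX3 u, hX3 u'],
    ⟨(0, 0), (0, 1), (hf_right 0).ne (by decide)⟩, ?_⟩
  rw [hf₂, hf₂]
  exact (hf_left a₃).ne (by decide)
end

section
/- Let B be an event with P(B) > 0. Let Y⁰, Y¹ : Ω → {0,1}, let U be a nonempty finite index set, and for each u ∈ U let G_u : Ω → {0,1} be a random variable; define N_u = G_u·Y¹ + (1 − G_u)·Y⁰ (that is, N_u(ω) = Y^{G_u(ω)}(ω)). Define the events C = {ω : Y⁰(ω) ≠ Y¹(ω)}, R = {ω : N_u(ω) = N_{u'}(ω) for all u, u' ∈ U}, and L₀ = {ω : G_u(ω) = G_{u'}(ω) for all u, u' ∈ U}. Then C ∩ R = C ∩ L₀, and consequently Pr(C ∩ R | B) = Pr(C ∩ L₀ | B). -/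
/-! On `C = {Y⁰ ≠ Y¹}` each `N_u = Y⁰ + G_u (Y¹ − Y⁰)` is an affine function of `G_u` with
nonzero slope, so the `N_u` all agree exactly when the `G_u` do. -/

open MeasureTheory

theorem mix_eq_mix_iff {R : Type*} [Ring R] [NoZeroDivisors R] {y₀ y₁ : R} (h : y₀ ≠ y₁)
    (g g' : R) : g * y₁ + (1 - g) * y₀ = g' * y₁ + (1 - g') * y₀ ↔ g = g' := by
  have hslope : y₁ - y₀ ≠ 0 := sub_ne_zero.mpr h.symm
  have affine : ∀ c : R, c * y₁ + (1 - c) * y₀ = c * (y₁ - y₀) + y₀ := fun c => by noncomm_ring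
  rw [affine, affine, add_left_inj, mul_left_inj' hslope]

theorem setOf_ne_inter_setOf_mix_eq {Ω U R : Type*} [Ring R] [NoZeroDivisors R]
    (Y₀ Y₁ : Ω → R) (G N : U → Ω → R) (hN : ∀ u ω, N u ω = G u ω * Y₁ ω + (1 - G u ω) * Y₀ ω) :
    {ω | Y₀ ω ≠ Y₁ ω} ∩ {ω | ∀ u u' : U, N u ω = N u' ω} =
      {ω | Y₀ ω ≠ Y₁ ω} ∩ {ω | ∀ u u' : U, G u ω = G u' ω} := by
  ext ω
  simp only [Set.mem_inter_iff, Set.mem_ofPred_eq, and_congr_right_iff]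
  intro hC
  simp only [hN, mix_eq_mix_iff hC]

theorem stmt11_general {Ω : Type*} [MeasurableSpace Ω] (μ : Measure Ω)
    (B : Set Ω)
    {U : Type*}
    (Y0 Y1 : Ω → ℝ)
    (G : U → Ω → ℝ)
    (N : U → Ω → ℝ) (hN : ∀ u ω, N u ω = G u ω * Y1 ω + (1 - G u ω) * Y0 ω) :
    ({ω | Y0 ω ≠ Y1 ω} ∩ {ω | ∀ u u' : U, N u ω = N u' ω} =
      {ω | Y0 ω ≠ Y1 ω} ∩ {ω | ∀ u u' : U, G u ω = G u' ω}) ∧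
    condProb μ ({ω | Y0 ω ≠ Y1 ω} ∩ {ω | ∀ u u' : U, N u ω = N u' ω}) B =
      condProb μ ({ω | Y0 ω ≠ Y1 ω} ∩ {ω | ∀ u u' : U, G u ω = G u' ω}) B := by
  have hCR := setOf_ne_inter_setOf_mix_eq Y0 Y1 G N hN
  exact ⟨hCR, by rw [hCR]⟩

/-- Property 2(b): with `N_u = G_u·Y¹ + (1 − G_u)·Y⁰`,
`C = {Y⁰ ≠ Y¹}`, `R = {all N_u equal}`, `L₀ = {all G_u equal}`, we have
`C ∩ R = C ∩ L₀`, hence `Pr(C ∩ R | B) = Pr(C ∩ L₀ | B)`. -/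
theorem stmt11 {Ω : Type*} [MeasurableSpace Ω] (μ : Measure Ω) [IsProbabilityMeasure μ]
    (B : Set Ω) (hBpos : 0 < μ B)
    {U : Type*} [Finite U] [Nonempty U]
    (Y0 Y1 : Ω → ℝ)
    (hY0 : ∀ ω, Y0 ω = 0 ∨ Y0 ω = 1) (hY1 : ∀ ω, Y1 ω = 0 ∨ Y1 ω = 1)
    (G : U → Ω → ℝ) (hG : ∀ u ω, G u ω = 0 ∨ G u ω = 1)
    (N : U → Ω → ℝ) (hN : ∀ u ω, N u ω = G u ω * Y1 ω + (1 - G u ω) * Y0 ω) :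
    ({ω | Y0 ω ≠ Y1 ω} ∩ {ω | ∀ u u' : U, N u ω = N u' ω} =
      {ω | Y0 ω ≠ Y1 ω} ∩ {ω | ∀ u u' : U, G u ω = G u' ω}) ∧
    condProb μ ({ω | Y0 ω ≠ Y1 ω} ∩ {ω | ∀ u u' : U, N u ω = N u' ω}) B =
      condProb μ ({ω | Y0 ω ≠ Y1 ω} ∩ {ω | ∀ u u' : U, G u ω = G u' ω}) B :=
  stmt11_general μ B Y0 Y1 G N hN
end

section
/- Fix x ∈ {0,1}^p, a finite set K, a finite cube {0,1}^m, and a distinguished point v̄ ∈ {0,1}^m. Suppose given {0,1}-valued random variables X = (X₁,…,X_p) and Y on Ω, a family (Y_u)_{u ∈ {0,1}^K} of {0,1}-valued random variables with Y_u(ω) ≤ Y_{u'}(ω) for all ω whenever u ≼ u', and maps G_v : Ω → {0,1}^K for v ∈ {0,1}^m; set N_v(ω) = Y_{G_v(ω)}(ω). Assume: (i) N_v(ω) ≤ N_{v'}(ω) for all ω whenever v ≼ v'; (ii) for every ω in the event {X = x}: G_{v̄}(ω) equals the observed values (X_k(ω))_{k ∈ K} and Y(ω) = N_{v̄}(ω).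 Define C = {ω : Y_u(ω) ≠ Y_{u'}(ω) for some u ≠ u'} and R = {ω : N_v(ω) = N_{v'}(ω) for all v, v'}, and let 0 and 1 denote the all-zeros and all-ones points of the relevant cubes. Then C ∩ R ∩ {X = x, Y = 1} = {Y_0 = 0} ∩ {N_0 = 1} ∩ {X = x}. Consequently, if P(X = x, Y = 1) > 0, then Pr(C ∩ R | X = x, Y = 1) = P(Y_0 = 0, N_0 = 1, X = x) / P(X = x, Y = 1). -/
/-!
For fixed `ω`, `u ↦ Y_u(ω)` is a monotone Boolean function on the cube, so it is nonconstant
exactly when it vanishes at `0` and is `1` somewhere; likewise `v ↦ N_v(ω)` is constant and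
equal to `Y(ω) = 1` (consistency) exactly when `N_0(ω) = 1`. Since `N_0(ω) = Y_{G_0(ω)}(ω)`,
the second condition supplies the point where `Y_u(ω) = 1`.
-/

open MeasureTheory

section MonotoneBool

variable {U V : Type*} [Preorder U] [OrderBot U] [Preorder V] [OrderBot V]

theorem Monotone.apply_eq_true_of_apply_bot {f : U → Bool} (hf : Monotone f)
    (hbot : f ⊥ = true) (a : U) : f a = true :=
  Bool.eq_true_of_true_le (hbot ▸ hf bot_le)

theorem Monotone.apply_bot_eq_false_of_ne {f : U → Bool} (hf : Monotone f) {a b : U}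
    (hab : f a ≠ f b) : f ⊥ = false := by
  by_contra hbot
  rw [Bool.not_eq_false] at hbot
  have hpos : ∀ c, f c = true := hf.apply_eq_true_of_apply_bot hbot
  exact hab ((hpos a).trans (hpos b).symm)

theorem responsive_and_invariant_iff {f : U → Bool} {n : V → Bool} {g : V → U}
    (hf : Monotone f) (hn : Monotone n) (hng : ∀ v, n v = f (g v)) {y : Bool} {vbar : V}
    (hy : y = n vbar) :
    ((∃ u u', u ≠ u' ∧ f u ≠ f u') ∧ (∀ v v', n v = n v')) ∧ y = true ↔
      f ⊥ = false ∧ n ⊥ = true := by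
  constructor
  · rintro ⟨⟨⟨u, u', -, hne⟩, hconst⟩, hy1⟩
    exact ⟨hf.apply_bot_eq_false_of_ne hne, hconst ⊥ vbar ▸ hy ▸ hy1⟩
  · rintro ⟨hf0, hn0⟩
    have hall : ∀ v, n v = true := hn.apply_eq_true_of_apply_bot hn0
    have hne : f ⊥ ≠ f (g ⊥) := by rw [hf0, ← hng, hn0]; decide
    exact ⟨⟨⟨⊥, g ⊥, fun h => hne (h ▸ rfl), hne⟩,
      fun v v' => (hall v).trans (hall v').symm⟩, hy ▸ hall vbar⟩

end MonotoneBool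

theorem stmt13_general {Ω : Type*} [MeasurableSpace Ω] (μ : Measure Ω)
    {p m : ℕ} (K : Finset (Fin p)) (x : Fin p → Bool) (vbar : Fin m → Bool)
    (X : Ω → Fin p → Bool) (Y : Ω → Bool)
    (Ypo : ({ k // k ∈ K } → Bool) → Ω → Bool)
    -- monotonicity of the potential outcomes of Y
    (hYmono : ∀ (u u' : { k // k ∈ K } → Bool), u ≤ u' → ∀ ω, Ypo u ω ≤ Ypo u' ω)
    (G : (Fin m → Bool) → Ω → ({ k // k ∈ K } → Bool))
    (N : (Fin m → Bool) → Ω → Bool)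
    (hN : ∀ v ω, N v ω = Ypo (G v ω) ω)
    -- (i) monotonicity of the nested counterfactuals
    (hNmono : ∀ (v v' : Fin m → Bool), v ≤ v' → ∀ ω, N v ω ≤ N v' ω)
    -- (ii) consistency on the event {X = x}
    (hcons : ∀ ω, X ω = x →
      (G vbar ω = fun k => X ω k.1) ∧ Y ω = N vbar ω) :
    ({ω | ∃ u u' : { k // k ∈ K } → Bool, u ≠ u' ∧ Ypo u ω ≠ Ypo u' ω} ∩
        {ω | ∀ v v' : Fin m → Bool, N v ω = N v' ω} ∩
        {ω | X ω = x ∧ Y ω = true} =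
      {ω | Ypo (fun _ => false) ω = false} ∩ {ω | N (fun _ => false) ω = true} ∩
        {ω | X ω = x}) ∧
    (0 < μ {ω | X ω = x ∧ Y ω = true} →
      condProb μ
          ({ω | ∃ u u' : { k // k ∈ K } → Bool, u ≠ u' ∧ Ypo u ω ≠ Ypo u' ω} ∩
            {ω | ∀ v v' : Fin m → Bool, N v ω = N v' ω})
          {ω | X ω = x ∧ Y ω = true} =
        (μ ({ω | Ypo (fun _ => false) ω = false} ∩ {ω | N (fun _ => false) ω = true} ∩
              {ω | X ω = x})).toReal /
          (μ {ω | X ω = x ∧ Y ω = true}).toReal) := by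
  have hevents : {ω | ∃ u u' : { k // k ∈ K } → Bool, u ≠ u' ∧ Ypo u ω ≠ Ypo u' ω} ∩
        {ω | ∀ v v' : Fin m → Bool, N v ω = N v' ω} ∩ {ω | X ω = x ∧ Y ω = true} =
      {ω | Ypo (fun _ => false) ω = false} ∩ {ω | N (fun _ => false) ω = true} ∩
        {ω | X ω = x} := by
    ext ω
    simp only [Set.mem_inter_iff, Set.mem_ofPred_eq]
    by_cases hx : X ω = x
    · simp only [hx, true_and, and_true]
      exact responsive_and_invariant_iff (fun u u' h => hYmono u u' h ω)
          (fun v v' h => hNmono v v' h ω) (hN · ω) (hcons ω hx).2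
    · simp [hx]
  exact ⟨hevents, fun _ => by rw [condProb, hevents]⟩

/-- key reduction in the proof of Theorem 1: under monotonicity and
consistency, `C ∩ R ∩ {X = x, Y = 1} = {Y_0 = 0} ∩ {N_0 = 1} ∩ {X = x}`, and hence
`Pr(C ∩ R | X = x, Y = 1) = P(Y_0 = 0, N_0 = 1, X = x) / P(X = x, Y = 1)`. -/
theorem stmt13 {Ω : Type*} [MeasurableSpace Ω] (μ : Measure Ω) [IsProbabilityMeasure μ]
    {p m : ℕ} (K : Finset (Fin p)) (x : Fin p → Bool) (vbar : Fin m → Bool)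
    (X : Ω → Fin p → Bool) (Y : Ω → Bool)
    (Ypo : ({ k // k ∈ K } → Bool) → Ω → Bool)
    -- monotonicity of the potential outcomes of Y
    (hYmono : ∀ (u u' : { k // k ∈ K } → Bool), u ≤ u' → ∀ ω, Ypo u ω ≤ Ypo u' ω)
    (G : (Fin m → Bool) → Ω → ({ k // k ∈ K } → Bool))
    (N : (Fin m → Bool) → Ω → Bool)
    (hN : ∀ v ω, N v ω = Ypo (G v ω) ω)
    -- (i) monotonicity of the nested counterfactuals
    (hNmono : ∀ (v v' : Fin m → Bool), v ≤ v' → ∀ ω, N v ω ≤ N v' ω)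
    -- (ii) consistency on the event {X = x}
    (hcons : ∀ ω, X ω = x →
      (G vbar ω = fun k => X ω k.1) ∧ Y ω = N vbar ω) :
    ({ω | ∃ u u' : { k // k ∈ K } → Bool, u ≠ u' ∧ Ypo u ω ≠ Ypo u' ω} ∩
        {ω | ∀ v v' : Fin m → Bool, N v ω = N v' ω} ∩
        {ω | X ω = x ∧ Y ω = true} =
      {ω | Ypo (fun _ => false) ω = false} ∩ {ω | N (fun _ => false) ω = true} ∩
        {ω | X ω = x}) ∧
    (0 < μ {ω | X ω = x ∧ Y ω = true} →
      condProb μ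
          ({ω | ∃ u u' : { k // k ∈ K } → Bool, u ≠ u' ∧ Ypo u ω ≠ Ypo u' ω} ∩
            {ω | ∀ v v' : Fin m → Bool, N v ω = N v' ω})
          {ω | X ω = x ∧ Y ω = true} =
        (μ ({ω | Ypo (fun _ => false) ω = false} ∩ {ω | N (fun _ => false) ω = true} ∩
              {ω | X ω = x})).toReal /
          (μ {ω | X ω = x ∧ Y ω = true}).toReal) :=
  stmt13_general μ K x vbar X Y Ypo hYmono G N hN hNmono hcons
end

section
/- Let Y⁰, Y¹ : Ω → {0,1} be random variables with Y⁰(ω) ≤ Y¹(ω) for all ω (monotonicity), and let X : Ω → {0,1}^p and Y : Ω → {0,1} be random variables. Fix a, b ∈ {0,1}^p with P(X = a) > 0 and P(X = b) > 0. Assume consistency: Y(ω) = Y¹(ω) for every ω ∈ {X = b} and Y(ω) = Y⁰(ω) for every ω ∈ {X = a}; and no confounding: the pair (Y⁰, Y¹) is independent of X. Then P(Y⁰ = 0, Y¹ = 1) = Pr(Y = 1 | X = b) − Pr(Y = 1 | X = a). -/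
open MeasureTheory ProbabilityTheory

/-! Consistency lets us replace `Y` by `Y¹` on `{X = b}` and by `Y⁰` on `{X = a}`; independence of
`(Y⁰, Y¹)` from `X` then makes both conditional probabilities unconditional, so the right-hand side
is `P(Y¹ = 1) − P(Y⁰ = 1)`. By monotonicity `{Y⁰ = 1} ⊆ {Y¹ = 1}`, and the difference of these
events is `{Y⁰ = 0, Y¹ = 1}`. -/

section CondProb

variable {Ω α β : Type*} [MeasurableSpace Ω] {μ : Measure Ω}

theorem condProb_preimage_congr {f g : Ω → α} {B : Set Ω} (h : Set.EqOn f g B) (s : Set α) :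
    condProb μ (f ⁻¹' s) B = condProb μ (g ⁻¹' s) B := by
  rw [condProb, condProb, Set.inter_comm, h.inter_preimage_eq, Set.inter_comm]

theorem ProbabilityTheory.IndepFun.condProb_preimage_eq [IsFiniteMeasure μ] [MeasurableSpace α]
    [MeasurableSpace β] {Z : Ω → α} {X : Ω → β} (h : IndepFun Z X μ) {s : Set α} {t : Set β}
    (hs : MeasurableSet s) (ht : MeasurableSet t) (hX : μ (X ⁻¹' t) ≠ 0) :
    condProb μ (Z ⁻¹' s) (X ⁻¹' t) = μ.real (Z ⁻¹' s) := by
  have hX' : (μ (X ⁻¹' t)).toReal ≠ 0 := ENNReal.toReal_ne_zero.mpr ⟨hX, measure_ne_top μ _⟩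
  rw [condProb, h.measure_inter_preimage_eq_mul s t hs ht, ENNReal.toReal_mul, mul_div_assoc,
    div_self hX', mul_one, measureReal_def]

theorem measureReal_false_and_true_of_le [IsFiniteMeasure μ] {U V : Ω → Bool}
    (hUV : ∀ ω, U ω ≤ V ω) (hU : Measurable U) :
    μ.real {ω | U ω = false ∧ V ω = true} = μ.real {ω | V ω = true} - μ.real {ω | U ω = true} := by
  have hsub : {ω | U ω = true} ⊆ {ω | V ω = true} :=
    fun ω hω ↦ Bool.eq_true_of_true_le (hω ▸ hUV ω)
  rw [← measureReal_sdiff hsub (hU (measurableSet_singleton true))]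
  congr 1
  ext ω
  simp only [Set.mem_ofPred_eq, Set.mem_sdiff, Bool.not_eq_true]
  tauto

end CondProb

theorem stmt14_general {Ω : Type*} [MeasurableSpace Ω] (μ : Measure Ω) [IsProbabilityMeasure μ]
    {p : ℕ} (Y0 Y1 : Ω → Bool) (hmono : ∀ ω, Y0 ω ≤ Y1 ω)
    (X : Ω → Fin p → Bool) (Y : Ω → Bool)
    (hY0meas : Measurable Y0)
    (a b : Fin p → Bool)
    (ha : 0 < μ {ω | X ω = a}) (hb : 0 < μ {ω | X ω = b})
    (hconsb : ∀ ω, X ω = b → Y ω = Y1 ω)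
    (hconsa : ∀ ω, X ω = a → Y ω = Y0 ω)
    (hindep : IndepFun (fun ω => (Y0 ω, Y1 ω)) X μ) :
    (μ {ω | Y0 ω = false ∧ Y1 ω = true}).toReal =
      condProb μ {ω | Y ω = true} {ω | X ω = b} -
        condProb μ {ω | Y ω = true} {ω | X ω = a} := by
  have hindep0 : IndepFun Y0 X μ := hindep.comp measurable_fst measurable_id
  have hindep1 : IndepFun Y1 X μ := hindep.comp measurable_snd measurable_id
  have hcondb : condProb μ (Y ⁻¹' {true}) (X ⁻¹' {b}) = μ.real (Y1 ⁻¹' {true}) := by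
    rw [condProb_preimage_congr (B := X ⁻¹' {b}) hconsb,
      hindep1.condProb_preimage_eq (.singleton _) (.singleton _) hb.ne']
  have hconda : condProb μ (Y ⁻¹' {true}) (X ⁻¹' {a}) = μ.real (Y0 ⁻¹' {true}) := by
    rw [condProb_preimage_congr (B := X ⁻¹' {a}) hconsa,
      hindep0.condProb_preimage_eq (.singleton _) (.singleton _) ha.ne']
  exact (measureReal_false_and_true_of_le hmono hY0meas).trans
    (congrArg₂ (· - ·) hcondb.symm hconda.symm)

/-- identification step in the proof of Theorem 1: under monotonicity
`Y⁰ ≤ Y¹`, consistency, and no confounding (`(Y⁰, Y¹)` independent of `X`),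
`P(Y⁰ = 0, Y¹ = 1) = Pr(Y = 1 | X = b) − Pr(Y = 1 | X = a)`. -/
theorem stmt14 {Ω : Type*} [MeasurableSpace Ω] (μ : Measure Ω) [IsProbabilityMeasure μ]
    {p : ℕ} (Y0 Y1 : Ω → Bool) (hmono : ∀ ω, Y0 ω ≤ Y1 ω)
    (X : Ω → Fin p → Bool) (Y : Ω → Bool)
    (hY0meas : Measurable Y0) (hY1meas : Measurable Y1)
    (hXmeas : Measurable X) (hYmeas : Measurable Y)
    (a b : Fin p → Bool)
    (ha : 0 < μ {ω | X ω = a}) (hb : 0 < μ {ω | X ω = b})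
    (hconsb : ∀ ω, X ω = b → Y ω = Y1 ω)
    (hconsa : ∀ ω, X ω = a → Y ω = Y0 ω)
    (hindep : IndepFun (fun ω => (Y0 ω, Y1 ω)) X μ) :
    (μ {ω | Y0 ω = false ∧ Y1 ω = true}).toReal =
      condProb μ {ω | Y ω = true} {ω | X ω = b} -
        condProb μ {ω | Y ω = true} {ω | X ω = a} :=
  stmt14_general μ Y0 Y1 hmono X Y hY0meas a b ha hb hconsb hconsa hindep
end
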